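/- arXiv:2512.08854 — 9 statements merged into one kernel-verified Lean document; each statement's English description precedes it below -/
import Mathlib

section
/- Let d ≥ 1 and let f : ℝ^d → ℝ^d be a twice continuously differentiable diffeomorphism that is coordinate-wise additive, with twice continuously differentiable inverse g = f^{-1}. Then for every x ∈ ℝ^d and every s ∈ {1,…,d}, the matrix (Dg(x))^{-T} · D²g_s(x) · (Dg(x))^{-1} is a diagonal d×d matrix (here Dg(x) is invertible since g is a diffeomorphism). -/
open Matrix

/-- Jacobian matrix of `f : ℝ^n → ℝ^m` at `z`, of shape `m × n`. -/
noncomputable def jacobian {n m : ℕ} (f : (Fin n → ℝ) → (Fin m → ℝ)) (z : Fin n → ℝ) :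
    Matrix (Fin m) (Fin n) ℝ :=
  Matrix.of fun i j => fderiv ℝ f z (Pi.single j 1) i

/-- Hessian matrix of a scalar function `f : ℝ^n → ℝ` at `z`. -/
noncomputable def hessian {n : ℕ} (f : (Fin n → ℝ) → ℝ) (z : Fin n → ℝ) :
    Matrix (Fin n) (Fin n) ℝ :=
  Matrix.of fun i j => fderiv ℝ (fun y => fderiv ℝ f y (Pi.single j 1)) z (Pi.single i 1)

/-- `f : ℝ^{d₁} → ℝ^{d₂}` is coordinate-wise additive: `f(z) = Σ_i f_i(z_i)`. -/
def CoordAdditive {d₁ d₂ : ℕ} (f : (Fin d₁ → ℝ) → (Fin d₂ → ℝ)) : Prop :=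
  ∃ F : Fin d₁ → ℝ → (Fin d₂ → ℝ), ∀ z, f z = ∑ i, F i (z i)

private lemma single_smul_one {d : ℕ} (k : Fin d) (c : ℝ) :
    (Pi.single k c : Fin d → ℝ) = c • (Pi.single k (1:ℝ) : Fin d → ℝ) := by
  ext m; rcases eq_or_ne m k with h | h <;> simp [Pi.single_apply, h]

private lemma toMat_mul {d : ℕ} (L M : (Fin d → ℝ) →L[ℝ] (Fin d → ℝ)) :
    ((Matrix.of fun i j => L (Pi.single j 1) i) * (Matrix.of fun i j => M (Pi.single j 1) i) :
      Matrix (Fin d) (Fin d) ℝ) = Matrix.of fun i j => L (M (Pi.single j 1)) i := by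
  ext i j
  simp only [Matrix.mul_apply, Matrix.of_apply]
  conv_rhs => rw [← Finset.univ_sum_single (M (Pi.single j 1))]
  rw [map_sum]
  simp only [Finset.sum_apply]
  refine Finset.sum_congr rfl fun k _ => ?_
  rw [single_smul_one k (M (Pi.single j 1) k), _root_.map_smul, Pi.smul_apply, smul_eq_mul, mul_comm]

private lemma bilin_expand {d : ℕ}
    (B : (Fin d → ℝ) →L[ℝ] ((Fin d → ℝ) →L[ℝ] (Fin d → ℝ))) (a b : Fin d → ℝ) :
    B a b = ∑ k, ∑ l, a k • b l • B (Pi.single k 1) (Pi.single l 1) := by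
  conv_lhs => rw [← Finset.univ_sum_single a]
  rw [map_sum, ContinuousLinearMap.sum_apply]
  refine Finset.sum_congr rfl fun k _ => ?_
  rw [single_smul_one k (a k), _root_.map_smul, ContinuousLinearMap.smul_apply]
  conv_lhs => rw [← Finset.univ_sum_single b, map_sum]
  rw [Finset.smul_sum]
  refine Finset.sum_congr rfl fun l _ => ?_
  rw [single_smul_one l (b l), _root_.map_smul]

private lemma fderiv_fderiv_apply {E F : Type*} [NormedAddCommGroup E] [NormedSpace ℝ E]
    [NormedAddCommGroup F] [NormedSpace ℝ F] {f : E → F} {z : E}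
    (h : DifferentiableAt ℝ (fderiv ℝ f) z) (v w : E) :
    fderiv ℝ (fun y => fderiv ℝ f y w) z v = fderiv ℝ (fderiv ℝ f) z v w := by
  have h2 := fderiv_clm_apply (𝕜 := ℝ) (c := fderiv ℝ f) (u := fun _ => w) h
    (differentiableAt_const w)
  rw [show (fun y => fderiv ℝ f y w) = fun y => (fderiv ℝ f y) ((fun _ : E => w) y) from rfl, h2]
  simp

private lemma clm_fderiv_comp {E F G : Type*} [NormedAddCommGroup E] [NormedSpace ℝ E]
    [NormedAddCommGroup F] [NormedSpace ℝ F] [NormedAddCommGroup G] [NormedSpace ℝ G]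
    {h : E → F} {z : E} (L : F →L[ℝ] G) (hh : DifferentiableAt ℝ h z) :
    fderiv ℝ (fun y => L (h y)) z = L.comp (fderiv ℝ h z) := by
  rw [show (fun y => L (h y)) = L ∘ h from rfl, fderiv_comp z L.differentiableAt hh, L.fderiv]

private lemma second_chain_zero {d : ℕ} {f g : (Fin d → ℝ) → (Fin d → ℝ)}
    (hf : ContDiff ℝ 2 f) (hg : ContDiff ℝ 2 g) (hgf : ∀ z, g (f z) = z)
    (z v w : Fin d → ℝ) :
    fderiv ℝ (fderiv ℝ g) (f z) (fderiv ℝ f z v) (fderiv ℝ f z w)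
      + fderiv ℝ g (f z) (fderiv ℝ (fderiv ℝ f) z v w) = 0 := by
  have hfd : Differentiable ℝ f := hf.differentiable (by norm_num)
  have hgd : Differentiable ℝ g := hg.differentiable (by norm_num)
  have hf1d : Differentiable ℝ (fderiv ℝ f) :=
    (hf.fderiv_right (by norm_num : (1:WithTop ℕ∞) + 1 ≤ 2)).differentiable (by norm_num)
  have hg1d : Differentiable ℝ (fderiv ℝ g) :=
    (hg.fderiv_right (by norm_num : (1:WithTop ℕ∞) + 1 ≤ 2)).differentiable (by norm_num)
  have hcomp : ∀ y, (fderiv ℝ g (f y)).comp (fderiv ℝ f y)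
      = ContinuousLinearMap.id ℝ (Fin d → ℝ) := by
    intro y
    have h1 : fderiv ℝ (g ∘ f) y = (fderiv ℝ g (f y)).comp (fderiv ℝ f y) :=
      fderiv_comp y (hgd (f y)) (hfd y)
    have h2 : (g ∘ f) = id := funext hgf
    rw [← h1, h2, fderiv_id]
  have hφ : (fun y => (fderiv ℝ g (f y)) (fderiv ℝ f y w)) = fun _ => w := by
    funext y
    calc (fderiv ℝ g (f y)) (fderiv ℝ f y w)
        = ((fderiv ℝ g (f y)).comp (fderiv ℝ f y)) w := rfl
      _ = w := by rw [hcomp y]; rfl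
  have hc : DifferentiableAt ℝ (fun y => fderiv ℝ g (f y)) z := by
    exact (hg1d (f z)).comp z (hfd z)
  have hu : DifferentiableAt ℝ (fun y => fderiv ℝ f y w) z :=
    (hf1d z).clm_apply (differentiableAt_const w)
  have hd := fderiv_clm_apply (𝕜 := ℝ) hc hu
  rw [show (fun y => (fun y => fderiv ℝ g (f y)) y ((fun y => fderiv ℝ f y w) y))
      = fun y => (fderiv ℝ g (f y)) (fderiv ℝ f y w) from rfl] at hd
  rw [hφ, fderiv_fun_const] at hd
  have happ := congrArg (fun T : (Fin d → ℝ) →L[ℝ] (Fin d → ℝ) => T v) hd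
  simp only [Pi.zero_apply, ContinuousLinearMap.zero_apply, ContinuousLinearMap.add_apply,
    ContinuousLinearMap.coe_comp', Function.comp_apply, ContinuousLinearMap.flip_apply] at happ
  have e1 : fderiv ℝ (fun y => fderiv ℝ f y w) z v = fderiv ℝ (fderiv ℝ f) z v w :=
    fderiv_fderiv_apply (hf1d z) v w
  have e2 : fderiv ℝ (fun y => fderiv ℝ g (f y)) z
      = (fderiv ℝ (fderiv ℝ g) (f z)).comp (fderiv ℝ f z) := by
    rw [show (fun y => fderiv ℝ g (f y)) = (fderiv ℝ g) ∘ f from rfl]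
    exact fderiv_comp z (hg1d (f z)) (hfd z)
  rw [e1, e2] at happ
  simp only [ContinuousLinearMap.coe_comp', Function.comp_apply] at happ
  rw [add_comm]; exact happ.symm

private lemma mixed_partial_zero {d : ℕ} {f : (Fin d → ℝ) → (Fin d → ℝ)}
    (hf : ContDiff ℝ 2 f) (F : Fin d → ℝ → (Fin d → ℝ)) (hF : ∀ z, f z = ∑ i, F i (z i))
    (z : Fin d → ℝ) {i j : Fin d} (hij : i ≠ j) :
    fderiv ℝ (fderiv ℝ f) z (Pi.single i 1) (Pi.single j 1) = 0 := by
  set φ : ℝ → (Fin d → ℝ) := fun t => f (t • (Pi.single j 1 : Fin d → ℝ)) with hφdef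
  have hlin : ContDiff ℝ 2 (fun t : ℝ => t • (Pi.single j 1 : Fin d → ℝ)) :=
    contDiff_id.smul contDiff_const
  have hφ : ContDiff ℝ 2 φ := hf.comp hlin
  have hφd : Differentiable ℝ φ := hφ.differentiable (by norm_num)
  have claim1 : ∀ y : Fin d → ℝ, fderiv ℝ f y (Pi.single j 1) = deriv φ (y j) := by
    intro y
    set ℓ : ℝ → (Fin d → ℝ) := fun t => y + (t - y j) • (Pi.single j 1 : Fin d → ℝ) with hℓdef
    have hℓ : HasDerivAt ℓ (Pi.single j 1) (y j) := by
      have h1 : HasDerivAt (fun t : ℝ => t - y j) 1 (y j) := (hasDerivAt_id _).sub_const _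
      have h2 := h1.smul_const (Pi.single j 1 : Fin d → ℝ)
      simpa [hℓdef] using h2.const_add y
    have hfl : HasDerivAt (fun t => f (ℓ t)) (fderiv ℝ f y (Pi.single j 1)) (y j) := by
      have hy : ℓ (y j) = y := by simp [hℓdef]
      have hdf : HasFDerivAt f (fderiv ℝ f y) (ℓ (y j)) := by
        rw [hy]; exact (hf.differentiable (by norm_num) y).hasFDerivAt
      exact hdf.comp_hasDerivAt (y j) hℓ
    have key : ∀ t : ℝ, f (ℓ t) = φ t + ∑ k, (if k = j then 0 else F k (y k) - F k 0) := by
      intro t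
      have h1 : f (ℓ t) = ∑ k, F k (ℓ t k) := hF _
      have h2 : φ t = ∑ k, F k ((t • (Pi.single j 1 : Fin d → ℝ)) k) := hF _
      rw [h1, h2, ← Finset.sum_add_distrib]
      refine Finset.sum_congr rfl fun k _ => ?_
      rcases eq_or_ne k j with h | h
      · subst h
        have hl : ℓ t k = t := by simp [hℓdef]
        have hr : (t • (Pi.single k 1 : Fin d → ℝ)) k = t := by simp
        rw [hl, hr]; simp
      · have hl : ℓ t k = y k := by simp [hℓdef, Pi.single_eq_of_ne h]
        have hr : (t • (Pi.single j 1 : Fin d → ℝ)) k = 0 := by simp [Pi.single_eq_of_ne h]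
        rw [hl, hr]; simp [h]
    have h2 : HasDerivAt (fun t => φ t + ∑ k, (if k = j then 0 else F k (y k) - F k 0))
        (deriv φ (y j)) (y j) := ((hφd (y j)).hasDerivAt).add_const _
    have := hfl
    rw [show (fun t => f (ℓ t))
        = fun t => φ t + ∑ k, (if k = j then 0 else F k (y k) - F k 0) from funext key] at this
    exact this.unique h2
  have hf1d : Differentiable ℝ (fderiv ℝ f) :=
    (hf.fderiv_right (by norm_num : (1:WithTop ℕ∞) + 1 ≤ 2)).differentiable (by norm_num)
  rw [← fderiv_fderiv_apply (hf1d z)]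
  have hfun : (fun y => fderiv ℝ f y (Pi.single j 1))
      = (deriv φ) ∘ (fun y : Fin d → ℝ => y j) := funext claim1
  rw [hfun]
  have hder : Differentiable ℝ (deriv φ) := by
    have h1 : Differentiable ℝ (fun t => fderiv ℝ φ t 1) :=
      fun t => ((hφ.fderiv_right (by norm_num : (1:WithTop ℕ∞) + 1 ≤ 2)).differentiable
        (by norm_num) t).clm_apply (differentiableAt_const 1)
    have : (fun t => fderiv ℝ φ t 1) = deriv φ := funext fun t => fderiv_apply_one_eq_deriv
    rwa [this] at h1
  have heval : DifferentiableAt ℝ (fun y : Fin d → ℝ => y j) z :=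
    (ContinuousLinearMap.proj j : (Fin d → ℝ) →L[ℝ] ℝ).differentiableAt
  rw [fderiv_comp z (hder (z j)) heval]
  have hevf : fderiv ℝ (fun y : Fin d → ℝ => y j) z
      = (ContinuousLinearMap.proj j : (Fin d → ℝ) →L[ℝ] ℝ) :=
    (ContinuousLinearMap.proj j : (Fin d → ℝ) →L[ℝ] ℝ).fderiv
  simp only [ContinuousLinearMap.coe_comp', Function.comp_apply, hevf,
    ContinuousLinearMap.proj_apply]
  rw [Pi.single_eq_of_ne hij.symm]
  simp

/-- If `f : ℝ^d → ℝ^d` is a C² coordinate-wise additive diffeomorphism with C² inverse `g`,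
then for every `x` and `s`, the matrix `(Dg(x))⁻ᵀ · D²g_s(x) · (Dg(x))⁻¹` is diagonal. -/
theorem inverse_of_additive_has_diagonal_conjugated_hessian (d : ℕ) (hd : 1 ≤ d)
    (f g : (Fin d → ℝ) → (Fin d → ℝ))
    (hf : ContDiff ℝ 2 f) (hg : ContDiff ℝ 2 g)
    (hgf : ∀ z, g (f z) = z) (hfg : ∀ x, f (g x) = x)
    (hadd : CoordAdditive f) :
    ∀ (x : Fin d → ℝ) (s : Fin d),
      (((jacobian g x)⁻¹)ᵀ * hessian (fun y => g y s) x * (jacobian g x)⁻¹).IsDiag := by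
  intro x s
  obtain ⟨F, hF⟩ := hadd
  have hfd : Differentiable ℝ f := hf.differentiable (by norm_num)
  have hgd : Differentiable ℝ g := hg.differentiable (by norm_num)
  have hg1d : Differentiable ℝ (fderiv ℝ g) :=
    (hg.fderiv_right (by norm_num : (1:WithTop ℕ∞) + 1 ≤ 2)).differentiable (by norm_num)
  have hfz : f (g x) = x := hfg x
  -- the inverse Jacobian
  have hJfg : jacobian g x * jacobian f (g x) = 1 := by
    unfold jacobian
    rw [toMat_mul]
    have hc : (fderiv ℝ g x).comp (fderiv ℝ f (g x)) = ContinuousLinearMap.id ℝ (Fin d → ℝ) := by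
      have h1 : fderiv ℝ (g ∘ f) (g x) = (fderiv ℝ g (f (g x))).comp (fderiv ℝ f (g x)) :=
        fderiv_comp _ (hgd _) (hfd _)
      rw [hfz] at h1
      have h2 : (g ∘ f) = id := funext hgf
      rw [← h1, h2, fderiv_id]
    ext i j
    have happ := congrArg (fun T : (Fin d → ℝ) →L[ℝ] (Fin d → ℝ) => T (Pi.single j 1) i) hc
    simp only [ContinuousLinearMap.coe_comp', Function.comp_apply,
      ContinuousLinearMap.coe_id', id_eq] at happ
    rw [Matrix.of_apply, happ, Matrix.one_apply, Pi.single_apply]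
  have hAinv : (jacobian g x)⁻¹ = jacobian f (g x) := Matrix.inv_eq_right_inv hJfg
  rw [hAinv]
  -- hessian entries as second derivatives of g
  have hHess : ∀ k l, hessian (fun y => g y s) x k l
      = fderiv ℝ (fderiv ℝ g) x (Pi.single k 1) (Pi.single l 1) s := by
    intro k l
    show fderiv ℝ (fun y => fderiv ℝ (fun y' => g y' s) y (Pi.single l 1)) x (Pi.single k 1) = _
    have e2 : (fun y => fderiv ℝ (fun y' => g y' s) y (Pi.single l 1))
        = fun y => (fderiv ℝ g y (Pi.single l 1)) s := by
      funext y
      rw [show (fun y' => g y' s)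
          = fun y' => (ContinuousLinearMap.proj s : (Fin d → ℝ) →L[ℝ] ℝ) (g y') from rfl,
        clm_fderiv_comp (ContinuousLinearMap.proj s) (hgd y)]
      rfl
    rw [e2,
      show (fun y => (fderiv ℝ g y (Pi.single l 1)) s)
        = fun y => (ContinuousLinearMap.proj s : (Fin d → ℝ) →L[ℝ] ℝ)
            ((fun y' => fderiv ℝ g y' (Pi.single l 1)) y) from rfl,
      clm_fderiv_comp (ContinuousLinearMap.proj s)
        ((hg1d x).clm_apply (differentiableAt_const _))]
    simp only [ContinuousLinearMap.coe_comp', Function.comp_apply,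
      ContinuousLinearMap.proj_apply]
    rw [fderiv_fderiv_apply (hg1d x)]
  -- conclude
  intro i j hij
  set B := fderiv ℝ (fderiv ℝ g) x with hB
  set a : Fin d → ℝ := fderiv ℝ f (g x) (Pi.single i 1) with ha
  set b : Fin d → ℝ := fderiv ℝ f (g x) (Pi.single j 1) with hb
  have hab : B a b = 0 := by
    have h0 := second_chain_zero hf hg hgf (g x) (Pi.single i 1) (Pi.single j 1)
    rw [hfz] at h0
    rw [mixed_partial_zero hf F hF (g x) hij] at h0
    simpa [hB, ha, hb] using h0
  have hmain : ((jacobian f (g x))ᵀ * hessian (fun y => g y s) x * jacobian f (g x)) i j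
      = (B a b) s := by
    rw [bilin_expand B a b]
    simp only [Matrix.mul_apply, Matrix.transpose_apply, Finset.sum_apply, Pi.smul_apply,
      smul_eq_mul, hHess, jacobian, Matrix.of_apply]
    rw [Finset.sum_comm]
    refine Finset.sum_congr rfl fun k _ => ?_
    rw [Finset.sum_mul]
    refine Finset.sum_congr rfl fun l _ => ?_
    ring
  rw [hmain, hab]
  rfl
end

section
/- Let d ≥ 1 and let g : ℝ^d → ℝ^d be a twice continuously differentiable diffeomorphism with twice continuously differentiable inverse f = g^{-1}, such that for every x ∈ ℝ^d and every s ∈ {1,…,d} the matrix (Dg(x))^{-T} · D²g_s(x) · (Dg(x))^{-1} is diagonal. Then f = g^{-1} is coordinate-wise additive; equivalently, all mixed second partial derivatives ∂_i∂_j f_k(z) with i ≠ j vanish for every z ∈ ℝ^d and every output coordinate k. -/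
open Matrix

section Aux

variable {d : ℕ}

lemma vec_sum (v : Fin d → ℝ) : v = ∑ i, v i • (Pi.single i 1 : Fin d → ℝ) := by
  conv_lhs => rw [← Finset.univ_sum_single v]
  refine Finset.sum_congr rfl fun i _ => ?_
  funext k
  simp [Pi.single_apply, mul_comm]

lemma clm_apply_basis {F : Type*} [NormedAddCommGroup F] [NormedSpace ℝ F]
    (L : (Fin d → ℝ) →L[ℝ] F) (v : Fin d → ℝ) :
    L v = ∑ i, v i • L (Pi.single i 1) := by
  conv_lhs => rw [vec_sum v]
  rw [map_sum]
  simp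

lemma fderiv_post_clm {F G : Type*} [NormedAddCommGroup F] [NormedSpace ℝ F]
    [NormedAddCommGroup G] [NormedSpace ℝ G]
    (L : F →L[ℝ] G) (u : (Fin d → ℝ) → F) (z : Fin d → ℝ)
    (hu : DifferentiableAt ℝ u z) :
    fderiv ℝ (fun y => L (u y)) z = L.comp (fderiv ℝ u z) := by
  have h := fderiv_comp z L.differentiableAt hu
  rw [L.fderiv] at h
  exact h

lemma hessian_eq (h : (Fin d → ℝ) → (Fin d → ℝ)) (hh : ContDiff ℝ 2 h)
    (z : Fin d → ℝ) (k i j : Fin d) :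
    hessian (fun y => h y k) z i j
      = fderiv ℝ (fderiv ℝ h) z (Pi.single i 1) (Pi.single j 1) k := by
  have hdiff : Differentiable ℝ h := hh.differentiable (by norm_num)
  have hd1 : Differentiable ℝ (fderiv ℝ h) :=
    (hh.fderiv_right (m := 1) (by norm_num)).differentiable (by norm_num)
  have e1 : (fun y => fderiv ℝ (fun y' => h y' k) y (Pi.single j 1))
      = fun y => fderiv ℝ h y (Pi.single j 1) k := by
    funext y
    have := fderiv_post_clm (ContinuousLinearMap.proj k) h y (hdiff y)
    have e2 : (fun y' => h y' k) = fun y' => (ContinuousLinearMap.proj (R := ℝ) k) (h y') := rfl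
    rw [e2, this]
    rfl
  show fderiv ℝ (fun y => fderiv ℝ (fun y' => h y' k) y (Pi.single j 1)) z (Pi.single i 1) = _
  rw [e1]
  have e3 : (fun y => fderiv ℝ h y (Pi.single j 1) k)
      = fun y => ((ContinuousLinearMap.proj (R := ℝ) k).comp
          (ContinuousLinearMap.apply ℝ (Fin d → ℝ) (Pi.single j 1))) (fderiv ℝ h y) := rfl
  rw [e3, fderiv_post_clm _ _ _ (hd1 z)]
  rfl

variable (g f : (Fin d → ℝ) → (Fin d → ℝ))

lemma chain_id (hg : ContDiff ℝ 2 g) (hf : ContDiff ℝ 2 f) (hgf : ∀ z, g (f z) = z) :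
    ∀ z, (fderiv ℝ g (f z)).comp (fderiv ℝ f z)
    = ContinuousLinearMap.id ℝ (Fin d → ℝ) := by
  intro z
  have hcomp : g ∘ f = id := funext hgf
  have h1 := fderiv_comp z ((hg.differentiable (by norm_num)) (f z))
    ((hf.differentiable (by norm_num)) z)
  rw [hcomp, fderiv_id] at h1
  exact h1.symm

lemma jac_mul (hg : ContDiff ℝ 2 g) (hf : ContDiff ℝ 2 f) (hgf : ∀ z, g (f z) = z) :
    ∀ z, jacobian g (f z) * jacobian f z = 1 := by
  intro z
  have h := chain_id g f hg hf hgf z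
  ext i k
  have h2 : (fderiv ℝ g (f z)) (fderiv ℝ f z (Pi.single k 1)) = Pi.single k 1 := by
    have := congrArg (fun L => L (Pi.single k (1:ℝ))) h
    simpa using this
  have h3 := congrFun h2 i
  rw [clm_apply_basis (fderiv ℝ g (f z)) (fderiv ℝ f z (Pi.single k 1))] at h3
  simp only [Finset.sum_apply, Pi.smul_apply, smul_eq_mul] at h3
  simp only [Matrix.mul_apply, jacobian, Matrix.of_apply, Matrix.one_apply]
  have h4 : (if i = k then (1:ℝ) else 0) = (Pi.single k 1 : Fin d → ℝ) i := by
    simp [Pi.single_apply, eq_comm]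
  rw [h4, ← h3]
  exact Finset.sum_congr rfl fun x _ => mul_comm _ _

theorem mixed_zero (hg : ContDiff ℝ 2 g) (hf : ContDiff ℝ 2 f)
    (hgf : ∀ z, g (f z) = z) (hfg : ∀ x, f (g x) = x)
    (hdiag : ∀ (x : Fin d → ℝ) (s : Fin d),
      (((jacobian g x)⁻¹)ᵀ * hessian (fun y => g y s) x * (jacobian g x)⁻¹).IsDiag) :
    ∀ (z : Fin d → ℝ) (i j : Fin d), i ≠ j →
      fderiv ℝ (fderiv ℝ f) z (Pi.single i 1) (Pi.single j 1) = 0 := by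
  intro z i j hij
  have hfd : Differentiable ℝ f := hf.differentiable (by norm_num)
  have hgd : Differentiable ℝ g := hg.differentiable (by norm_num)
  have hfd1 : Differentiable ℝ (fderiv ℝ f) :=
    (hf.fderiv_right (m := 1) (by norm_num)).differentiable (by norm_num)
  have hgd1 : Differentiable ℝ (fderiv ℝ g) :=
    (hg.fderiv_right (m := 1) (by norm_num)).differentiable (by norm_num)
  set ei : Fin d → ℝ := Pi.single i 1 with hei
  set ej : Fin d → ℝ := Pi.single j 1 with hej
  -- derivative of z ↦ Dg(f z)
  have hA : HasFDerivAt (fun y => fderiv ℝ g (f y))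
      ((fderiv ℝ (fderiv ℝ g) (f z)).comp (fderiv ℝ f z)) z :=
    ((hgd1 (f z)).hasFDerivAt).comp z ((hfd z).hasFDerivAt)
  -- derivative of z ↦ Df(z) eⱼ
  have hu : HasFDerivAt (fun y => fderiv ℝ f y ej)
      ((ContinuousLinearMap.apply ℝ (Fin d → ℝ) ej).comp (fderiv ℝ (fderiv ℝ f) z)) z :=
    ((ContinuousLinearMap.apply ℝ (Fin d → ℝ) ej).hasFDerivAt).comp z ((hfd1 z).hasFDerivAt)
  have hcomb := hA.clm_apply hu
  have hconst : (fun y => (fderiv ℝ g (f y)) (fderiv ℝ f y ej)) = fun _ => ej := by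
    funext y
    have := congrArg (fun L => L ej) (chain_id g f hg hf hgf y)
    simpa using this
  rw [hconst] at hcomb
  have hzero := hcomb.unique (hasFDerivAt_const ej z)
  have key := congrArg (fun L => L ei) hzero
  simp only [ContinuousLinearMap.add_apply, ContinuousLinearMap.comp_apply,
    ContinuousLinearMap.flip_apply, ContinuousLinearMap.apply_apply,
    ContinuousLinearMap.zero_apply] at key
  -- key : Dg(f z) (D²f z ei ej) + D²g(f z) (Df z ei) (Df z ej) = 0
  have hterm2 : (fderiv ℝ (fderiv ℝ g) (f z)) (fderiv ℝ f z ei) (fderiv ℝ f z ej) = 0 := by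
    funext s
    set B := fderiv ℝ (fderiv ℝ g) (f z) with hB
    set v := fderiv ℝ f z ei with hv
    set w := fderiv ℝ f z ej with hw
    have expand : B v w s
        = ∑ a, ∑ b, v a * w b * (B (Pi.single a 1) (Pi.single b 1) s) := by
      rw [clm_apply_basis B v, ContinuousLinearMap.sum_apply, Finset.sum_apply]
      refine Finset.sum_congr rfl fun a _ => ?_
      simp only [ContinuousLinearMap.smul_apply, Pi.smul_apply, smul_eq_mul]
      rw [clm_apply_basis (B (Pi.single a 1)) w, Finset.sum_apply, Finset.mul_sum]
      refine Finset.sum_congr rfl fun b _ => ?_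
      simp only [Pi.smul_apply, smul_eq_mul]
      ring
    have hinv : (jacobian g (f z))⁻¹ = jacobian f z :=
      Matrix.inv_eq_right_inv (jac_mul g f hg hf hgf z)
    have hmat := hdiag (f z) s hij
    rw [hinv] at hmat
    have hentry : ((jacobian f z)ᵀ * hessian (fun y => g y s) (f z) * jacobian f z) i j
        = ∑ a, ∑ b, v a * w b * (B (Pi.single a 1) (Pi.single b 1) s) := by
      simp only [Matrix.mul_apply, Matrix.transpose_apply, Finset.sum_mul, Finset.mul_sum]
      rw [Finset.sum_comm]
      refine Finset.sum_congr rfl fun a _ => ?_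
      refine Finset.sum_congr rfl fun b _ => ?_
      rw [hessian_eq g hg (f z) s a b]
      simp only [jacobian, Matrix.of_apply, hv, hw, hB]
      ring
    rw [expand, ← hentry, hmat]
    rfl
  rw [hterm2, add_zero] at key
  -- now Dg(f z) applied to c is 0; Dg(f z) is injective
  have hinj := chain_id f g hf hg hfg (f z)
  rw [hgf z] at hinj
  have := congrArg (fun L => L ((fderiv ℝ (fderiv ℝ f) z) ei ej)) hinj
  simp only [ContinuousLinearMap.comp_apply, ContinuousLinearMap.id_apply] at this
  rw [key] at this
  rw [← this]
  simp

lemma clm_ext_basis {F : Type*} [NormedAddCommGroup F] [NormedSpace ℝ F]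
    {L : (Fin d → ℝ) →L[ℝ] F} (h : ∀ i, L (Pi.single i 1) = 0) : L = 0 := by
  ext v
  rw [clm_apply_basis]
  simp [h]


theorem coord_additive_of_mixed (h : (Fin d → ℝ) → (Fin d → ℝ)) (hd : 1 ≤ d)
    (hh : ContDiff ℝ 2 h)
    (hmix : ∀ (z : Fin d → ℝ) (i j : Fin d), i ≠ j →
      fderiv ℝ (fderiv ℝ h) z (Pi.single i 1) (Pi.single j 1) = 0) :
    CoordAdditive h := by
  have hdiff : Differentiable ℝ h := hh.differentiable (by norm_num)
  have hdiff1 : Differentiable ℝ (fderiv ℝ h) :=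
    (hh.fderiv_right (m := 1) (by norm_num)).differentiable (by norm_num)
  -- Step 1: moving a coordinate i ≠ j to 0 does not change ∂ⱼh
  have onevar : ∀ (j i : Fin d), i ≠ j → ∀ w : Fin d → ℝ,
      fderiv ℝ h w (Pi.single j 1) = fderiv ℝ h (Function.update w i 0) (Pi.single j 1) := by
    intro j i hij w
    set ψ : (Fin d → ℝ) → (Fin d → ℝ) := fun y => fderiv ℝ h y (Pi.single j 1) with hψdef
    have hψ : Differentiable ℝ ψ := hdiff1.clm_apply (differentiable_const _)
    have hψd : ∀ y, fderiv ℝ ψ y (Pi.single i 1) = 0 := by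
      intro y
      have e : ψ = fun y => (ContinuousLinearMap.apply ℝ (Fin d → ℝ) (Pi.single j 1))
          (fderiv ℝ h y) := rfl
      rw [e, fderiv_post_clm _ _ _ (hdiff1 y)]
      exact hmix y i j hij
    -- the path t ↦ update w i t
    set L : ℝ → (Fin d → ℝ) := fun t => Function.update w i t with hLdef
    have hLeq : L = fun t => Function.update w i 0 + t • (Pi.single i 1 : Fin d → ℝ) := by
      funext t k
      by_cases hk : k = i <;> simp [hLdef, Function.update_apply, Pi.single_apply, hk,
        eq_comm]
    have hL : ∀ t : ℝ, HasDerivAt L (Pi.single i 1) t := by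
      intro t
      rw [hLeq]
      have h1 : HasDerivAt (fun t : ℝ => t • (Pi.single i 1 : Fin d → ℝ))
          ((1:ℝ) • (Pi.single i 1 : Fin d → ℝ)) t := (hasDerivAt_id t).smul_const _
      rw [one_smul] at h1
      exact h1.const_add _
    set c : ℝ → (Fin d → ℝ) := fun t => ψ (L t) with hcdef
    have hc : ∀ t : ℝ, HasDerivAt c 0 t := by
      intro t
      have := ((hψ (L t)).hasFDerivAt).comp_hasDerivAt t (hL t)
      rw [hψd (L t)] at this
      exact this
    have hconst := is_const_of_deriv_eq_zero (fun t => (hc t).differentiableAt)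
      (fun t => (hc t).deriv) (w i) 0
    have hcw : c (w i) = ψ w := by
      simp only [hcdef, hLdef, Function.update_eq_self]
    show ψ w = ψ (Function.update w i 0)
    rw [← hcw, hconst]
  -- Step 2: zero out every coordinate in a finset avoiding j
  have zeroOn : ∀ (j : Fin d) (S : Finset (Fin d)), j ∉ S → ∀ z : Fin d → ℝ,
      fderiv ℝ h z (Pi.single j 1)
        = fderiv ℝ h (fun k => if k ∈ S then 0 else z k) (Pi.single j 1) := by
    intro j S
    induction S using Finset.induction_on with
    | empty => intro _ z; simp
    | @insert i S hiS IH =>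
      intro hj z
      have hji : j ≠ i := fun e => hj (e ▸ Finset.mem_insert_self i S)
      have hjS : j ∉ S := fun e => hj (Finset.mem_insert_of_mem e)
      rw [IH hjS z]
      rw [onevar j i (fun e => hji e.symm) (fun k => if k ∈ S then 0 else z k)]
      congr 2
      funext k
      by_cases hk : k = i
      · simp [hk, Function.update_apply]
      · simp [hk, Function.update_apply, Finset.mem_insert]
  -- Step 3: ∂ⱼ h depends only on zⱼ
  have only_own : ∀ (j : Fin d) (z : Fin d → ℝ),
      fderiv ℝ h z (Pi.single j 1)
        = fderiv ℝ h (Pi.single j (z j)) (Pi.single j 1) := by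
    intro j z
    rw [zeroOn j (Finset.univ.erase j) (Finset.notMem_erase j _) z]
    congr 2
    funext k
    by_cases hk : k = j
    · simp [hk, Pi.single_apply]
    · simp [hk, Pi.single_apply, Ne.symm hk]
  -- the coordinate embedding CLM
  set L : Fin d → ((Fin d → ℝ) →L[ℝ] (Fin d → ℝ)) := fun i =>
    (ContinuousLinearMap.pi (fun k => if k = i then ContinuousLinearMap.id ℝ ℝ else 0)).comp
      (ContinuousLinearMap.proj i) with hLdef
  have hLapp : ∀ (i : Fin d) (z : Fin d → ℝ), L i z = Pi.single i (z i) := by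
    intro i z
    funext k
    simp only [hLdef, ContinuousLinearMap.comp_apply, ContinuousLinearMap.proj_apply,
      ContinuousLinearMap.pi_apply, Pi.single_apply]
    by_cases hk : k = i
    · subst hk; simp
    · rw [if_neg hk, if_neg hk]; rfl
  -- φ and its derivative
  set φ : (Fin d → ℝ) → (Fin d → ℝ) := fun z => h z - ∑ i, h (Pi.single i (z i)) with hφdef
  have hφ' : ∀ z, HasFDerivAt φ
      (fderiv ℝ h z - ∑ i, (fderiv ℝ h (Pi.single i (z i))).comp (L i)) z := by
    intro z
    refine HasFDerivAt.sub ((hdiff z).hasFDerivAt) ?_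
    refine HasFDerivAt.fun_sum fun i _ => ?_
    have hcomp := ((hdiff (L i z)).hasFDerivAt).comp z ((L i).hasFDerivAt)
    rw [hLapp i z] at hcomp
    have e : (h ∘ (L i)) = fun y => h (Pi.single i (y i)) := by
      funext y; rw [Function.comp_apply, hLapp i y]
    rw [e] at hcomp
    exact hcomp
  have hφD : ∀ z, (fderiv ℝ h z - ∑ i, (fderiv ℝ h (Pi.single i (z i))).comp (L i)) = 0 := by
    intro z
    apply clm_ext_basis
    intro j
    simp only [ContinuousLinearMap.sub_apply, ContinuousLinearMap.sum_apply,
      ContinuousLinearMap.comp_apply]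
    have hsum : ∑ i, fderiv ℝ h (Pi.single i (z i)) (L i (Pi.single j 1))
        = fderiv ℝ h (Pi.single j (z j)) (Pi.single j 1) := by
      have : ∀ i : Fin d, fderiv ℝ h (Pi.single i (z i)) (L i (Pi.single j 1))
          = if i = j then fderiv ℝ h (Pi.single j (z j)) (Pi.single j 1) else 0 := by
        intro i
        rw [hLapp i]
        by_cases hij : i = j
        · subst hij; simp [Pi.single_apply]
        · have : (Pi.single j 1 : Fin d → ℝ) i = 0 := by
            simp [Pi.single_apply, Ne.symm hij]
          rw [this, Pi.single_zero, map_zero]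
          simp [hij]
      rw [Finset.sum_congr rfl fun i _ => this i, Finset.sum_ite_eq' Finset.univ j]
      simp
    rw [hsum, ← only_own j z, sub_self]
  have hφdiff : Differentiable ℝ φ := fun z => (hφ' z).differentiableAt
  have hφconst := is_const_of_fderiv_eq_zero hφdiff
    (fun z => by rw [(hφ' z).fderiv, hφD z])
  -- assemble
  classical
  set i₀ : Fin d := ⟨0, hd⟩ with hi₀
  refine ⟨fun i t => h (Pi.single i t) +
    (if i = i₀ then (h 0 - ∑ _i : Fin d, h (0 : Fin d → ℝ)) else 0), fun z => ?_⟩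
  have key := hφconst z 0
  simp only [hφdef] at key
  have h0 : ∀ i : Fin d, Pi.single i ((0 : Fin d → ℝ) i) = (0 : Fin d → ℝ) := by
    intro i; simp
  rw [Finset.sum_congr rfl fun i _ => congrArg h (h0 i)] at key
  rw [Finset.sum_add_distrib, Finset.sum_ite_eq' Finset.univ i₀]
  simp only [Finset.mem_univ, if_true]
  linear_combination (norm := abel) key

end Aux

/-- If `g : ℝ^d → ℝ^d` is a C² diffeomorphism with C² inverse `f`, and for all `x` and `s`
the matrix `(Dg(x))⁻ᵀ · D²g_s(x) · (Dg(x))⁻¹` is diagonal, then `f = g⁻¹` is coordinate-wise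
additive; equivalently, all mixed second partial derivatives of `f` vanish. -/
theorem additive_of_diagonal_conjugated_hessian (d : ℕ) (hd : 1 ≤ d)
    (g f : (Fin d → ℝ) → (Fin d → ℝ))
    (hg : ContDiff ℝ 2 g) (hf : ContDiff ℝ 2 f)
    (hgf : ∀ z, g (f z) = z) (hfg : ∀ x, f (g x) = x)
    (hdiag : ∀ (x : Fin d → ℝ) (s : Fin d),
      (((jacobian g x)⁻¹)ᵀ * hessian (fun y => g y s) x * (jacobian g x)⁻¹).IsDiag) :
    CoordAdditive f ∧
      ∀ (z : Fin d → ℝ) (k i j : Fin d), i ≠ j → hessian (fun z' => f z' k) z i j = 0 := by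
  have hmix := mixed_zero g f hg hf hgf hfg hdiag
  refine ⟨coord_additive_of_mixed f hd hf hmix, ?_⟩
  intro z k i j hij
  rw [hessian_eq f hf z k i j, hmix z i j hij]
  rfl
end

section
/- Let d_x ≥ d_z ≥ 1, let f : ℝ^{d_z} → ℝ^{d_x} be a twice continuously differentiable coordinate-wise additive map, and let g : ℝ^{d_x} → ℝ^{d_z} be a twice continuously differentiable left inverse of f, i.e. g(f(z)) = z for all z ∈ ℝ^{d_z}. Then for every z ∈ ℝ^{d_z} and every s ∈ {1,…,d_z}, the d_z×d_z matrix Df(z)ᵀ · D²g_s(f(z)) · Df(z) is diagonal. -/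
open Matrix

/-- If `f : ℝ^{d_z} → ℝ^{d_x}` (with `d_x ≥ d_z ≥ 1`) is C² and coordinate-wise additive, and
`g : ℝ^{d_x} → ℝ^{d_z}` is a C² left inverse of `f`, then for every `z` and every `s`, the
matrix `Df(z)ᵀ · D²g_s(f(z)) · Df(z)` is diagonal. -/
theorem left_inverse_of_additive_has_diagonal_pulled_back_hessian (d_z d_x : ℕ)
    (hdz : 1 ≤ d_z) (hdx : d_z ≤ d_x)
    (f : (Fin d_z → ℝ) → (Fin d_x → ℝ)) (g : (Fin d_x → ℝ) → (Fin d_z → ℝ))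
    (hf : ContDiff ℝ 2 f) (hg : ContDiff ℝ 2 g)
    (hadd : CoordAdditive f)
    (hgf : ∀ z, g (f z) = z) :
    ∀ (z : Fin d_z → ℝ) (s : Fin d_z),
      ((jacobian f z)ᵀ * hessian (fun x => g x s) (f z) * jacobian f z).IsDiag := by
  intro z s i j hij
  obtain ⟨F, hF⟩ := hadd
  set ei : Fin d_z → ℝ := Pi.single i 1 with hei
  set ej : Fin d_z → ℝ := Pi.single j 1 with hej
  set G : (Fin d_x → ℝ) → ℝ := fun y => g y s with hGdef
  have hG : ContDiff ℝ 2 G :=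
    (ContinuousLinearMap.proj (R := ℝ) (φ := fun _ : Fin d_z => ℝ) s).contDiff.comp hg
  have hfd : Differentiable ℝ f := hf.differentiable two_ne_zero
  have hGd : Differentiable ℝ G := hG.differentiable two_ne_zero
  have hG1 : ContDiff ℝ 1 (fderiv ℝ G) := hG.fderiv_right (by norm_num)
  have hf1 : ContDiff ℝ 1 (fderiv ℝ f) := hf.fderiv_right (by norm_num)
  set u : Fin d_x → ℝ := fderiv ℝ f z ei with hu
  set v : Fin d_x → ℝ := fderiv ℝ f z ej with hv
  set B : (Fin d_x → ℝ) →L[ℝ] (Fin d_x → ℝ) →L[ℝ] ℝ := fderiv ℝ (fderiv ℝ G) (f z) with hB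
  set ψ : (Fin d_z → ℝ) → (Fin d_x → ℝ) := fun w => fderiv ℝ f w ej with hψ
  have hψd : Differentiable ℝ ψ := fun w =>
    ((hf1.differentiable one_ne_zero) w).clm_apply (differentiableAt_const _)
  have hline : ∀ (a e : Fin d_z → ℝ) (t : ℝ),
      HasDerivAt (fun σ : ℝ => a + σ • e) e t := by
    intro a e t
    simpa using ((hasDerivAt_id t).smul_const e).const_add a
  have hdirline : ∀ (a e : Fin d_z → ℝ),
      HasDerivAt (fun σ : ℝ => f (a + σ • e)) (fderiv ℝ f a e) 0 := by
    intro a e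
    have h1 := (hfd (a + (0:ℝ) • e)).hasFDerivAt.comp_hasDerivAt 0 (hline a e 0)
    simpa [Function.comp_def] using h1
  have hconst : ∀ t : ℝ, ψ (z + t • ei) = ψ z := by
    intro t
    set w : Fin d_z → ℝ := z + t • ei with hw
    have hwj : w j = z j := by
      simp [hw, hei, Pi.single_apply, (Ne.symm hij)]
    have hshift : ∀ σ : ℝ, f (w + σ • ej) - f w = f (z + σ • ej) - f z := by
      intro σ
      rw [hF (w + σ • ej), hF w, hF (z + σ • ej), hF z,
        ← Finset.sum_sub_distrib, ← Finset.sum_sub_distrib]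
      refine Finset.sum_congr rfl fun k _ => ?_
      by_cases hk : k = j
      · subst hk
        simp [hej, Pi.single_apply, hwj]
      · simp [hej, Pi.single_apply, hk]
    have heq : (fun σ : ℝ => f (w + σ • ej)) =
        fun σ : ℝ => f (z + σ • ej) + (f w - f z) := by
      funext σ
      have h := hshift σ
      have h2 : f (w + σ • ej) = (f (z + σ • ej) - f z) + f w := by
        rw [← h]; abel
      rw [h2]; abel
    have D1 : HasDerivAt (fun σ : ℝ => f (w + σ • ej)) (fderiv ℝ f w ej) 0 :=
      hdirline w ej
    have D2 : HasDerivAt (fun σ : ℝ => f (w + σ • ej)) (fderiv ℝ f z ej) 0 := by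
      rw [heq]
      exact (hdirline z ej).add_const _
    exact D1.unique D2
  have hmixed : fderiv ℝ ψ z ei = 0 := by
    have hcomp : HasDerivAt (fun t : ℝ => ψ (z + t • ei)) (fderiv ℝ ψ z ei) 0 := by
      have h1 := (hψd (z + (0:ℝ) • ei)).hasFDerivAt.comp_hasDerivAt 0 (hline z ei 0)
      simpa [Function.comp_def] using h1
    have hconst' : (fun t : ℝ => ψ (z + t • ei)) = fun _ => ψ z :=
      funext fun t => hconst t
    rw [hconst'] at hcomp
    exact hcomp.unique (hasDerivAt_const 0 _)
  have hqconst : ∀ w, fderiv ℝ G (f w) (ψ w) = ej s := by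
    intro w
    have h1 : (fun y => G (f y)) = fun y : Fin d_z → ℝ => y s := by
      funext y; simp [hGdef, hgf]
    have h2 : fderiv ℝ (fun y => G (f y)) w
        = ContinuousLinearMap.proj (R := ℝ) (φ := fun _ : Fin d_z => ℝ) s := by
      rw [h1]
      exact (ContinuousLinearMap.proj (R := ℝ) (φ := fun _ : Fin d_z => ℝ) s).fderiv
    have h3 : fderiv ℝ (fun y => G (f y)) w
        = (fderiv ℝ G (f w)).comp (fderiv ℝ f w) := by
      rw [← fderiv_comp w (hGd (f w)) (hfd w)]
      rfl
    have h4 := h3.symm.trans h2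
    have := congrArg (fun (L : (Fin d_z → ℝ) →L[ℝ] ℝ) => L ej) h4
    simpa [hψ] using this
  have hcd : DifferentiableAt ℝ (fun w => fderiv ℝ G (f w)) z :=
    ((hG1.differentiable one_ne_zero) (f z)).comp z (hfd z)
  have hBuv : B u v = 0 := by
    have hq0 : fderiv ℝ (fun w => fderiv ℝ G (f w) (ψ w)) z = 0 := by
      have hc : (fun w => fderiv ℝ G (f w) (ψ w)) = fun _ => ej s := funext hqconst
      rw [hc]
      exact fderiv_const_apply _
    have hq1 := fderiv_clm_apply (𝕜 := ℝ) hcd (hψd z)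
    rw [hq0] at hq1
    have hq2 := congrArg (fun (L : (Fin d_z → ℝ) →L[ℝ] ℝ) => L ei) hq1.symm
    simp only [ContinuousLinearMap.add_apply, ContinuousLinearMap.comp_apply,
      ContinuousLinearMap.flip_apply, ContinuousLinearMap.zero_apply] at hq2
    have hc2 : fderiv ℝ (fun w => fderiv ℝ G (f w)) z = B.comp (fderiv ℝ f z) := by
      rw [hB, ← fderiv_comp z ((hG1.differentiable one_ne_zero) (f z)) (hfd z)]
      rfl
    rw [hc2, hmixed] at hq2
    symm
    simpa [hu, hv, hψ] using hq2.symm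
  have hH : ∀ a b : Fin d_x, hessian G (f z) a b
      = B (Pi.single a 1) (Pi.single b 1) := by
    intro a b
    have hd := fderiv_clm_apply (𝕜 := ℝ) (c := fderiv ℝ G)
      (u := fun _ => (Pi.single b 1 : Fin d_x → ℝ)) (x := f z)
      ((hG1.differentiable one_ne_zero) (f z)) (differentiableAt_const _)
    have := congrArg (fun (L : (Fin d_x → ℝ) →L[ℝ] ℝ) => L (Pi.single a 1)) hd
    simpa [hessian, hB] using this
  have hdecomp : ∀ x : Fin d_x → ℝ, x = ∑ a, x a • (Pi.single a (1:ℝ) : Fin d_x → ℝ) := by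
    intro x
    conv_lhs => rw [← Finset.univ_sum_single x]
    congr 1; funext a; ext k; simp [Pi.single_apply]
  have hexpand : B u v = ∑ a, ∑ b,
      u a * v b * B (Pi.single a 1) (Pi.single b 1) := by
    conv_lhs => rw [hdecomp u, hdecomp v]
    simp only [map_sum, ContinuousLinearMap.sum_apply, ContinuousLinearMap.coe_sum',
      Finset.sum_apply]
    rw [Finset.sum_comm]
    refine Finset.sum_congr rfl fun a _ => Finset.sum_congr rfl fun b _ => ?_
    rw [ContinuousLinearMap.map_smul, ContinuousLinearMap.map_smul,
      ContinuousLinearMap.smul_apply, smul_eq_mul, smul_eq_mul]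
    ring
  show ((jacobian f z)ᵀ * hessian G (f z) * jacobian f z) i j = 0
  rw [← hBuv, hexpand]
  simp only [Matrix.mul_apply, Matrix.transpose_apply, jacobian, Matrix.of_apply,
    Finset.sum_mul, Finset.mul_sum]
  rw [Finset.sum_comm]
  refine Finset.sum_congr rfl fun a _ => Finset.sum_congr rfl fun b _ => ?_
  rw [hH a b]
  simp only [← hei, ← hej, ← hu, ← hv]
  ring
end

section
/- Assume d_x ≥ d_z³ with d_z ≥ 1, and let B_1,…,B_{d_z} ∈ ℝ^{d_x×d_x} be symmetric matrices. Then for (Lebesgue-)almost every matrix A ∈ ℝ^{d_z×d_x} there exists a matrix M ∈ ℝ^{d_x×d_z} such that A·M = I_{d_z} and Mᵀ·B_s·M is a diagonal d_z×d_z matrix for every s ∈ {1,…,d_z}. -/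
open Matrix MeasureTheory


lemma ae_eval_ne_zero_fin (n : ℕ) (p : MvPolynomial (Fin n) ℝ) (hp : p ≠ 0) :
    ∀ᵐ x ∂(volume : Measure (Fin n → ℝ)), MvPolynomial.eval x p ≠ 0 := by
  induction n with
  | zero =>
    obtain ⟨c, rfl⟩ := MvPolynomial.C_surjective (Fin 0) p
    have hc : c ≠ 0 := fun h => hp (by simp [h])
    filter_upwards with x
    simpa using hc
  | succ n ih =>
    rw [MeasureTheory.ae_iff]
    simp only [not_not]
    set q : Polynomial (MvPolynomial (Fin n) ℝ) := MvPolynomial.finSuccEquiv ℝ n p with hq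
    have hq0 : q ≠ 0 := by
      rw [hq]
      intro h
      exact hp (EmbeddingLike.map_eq_zero_iff.mp h)
    obtain ⟨k, hk⟩ : ∃ k, q.coeff k ≠ 0 := by
      by_contra h
      push_neg at h
      exact hq0 (Polynomial.ext fun k => by simp [h k])
    -- continuity
    have hcont : Continuous fun ya : (Fin n → ℝ) × ℝ =>
        MvPolynomial.eval (Fin.cons ya.2 ya.1) p := by
      apply (MvPolynomial.continuous_eval p).comp
      apply continuous_pi
      intro i
      induction i using Fin.cases with
      | zero => simpa using continuous_snd
      | succ j =>
        have hcj : Continuous fun a : (Fin n → ℝ) × ℝ => a.1 j :=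
          (continuous_apply j).comp continuous_fst
        simpa using hcj
    set T : Set ((Fin n → ℝ) × ℝ) :=
      {ya | MvPolynomial.eval (Fin.cons ya.2 ya.1) p = 0} with hT
    have hTm : MeasurableSet T :=
      (isClosed_eq hcont continuous_const).measurableSet
    -- measure-preserving to product
    have e := MeasureTheory.volume_preserving_piFinSuccAbove (fun _ : Fin (n + 1) => ℝ) 0
    have key : ∀ x : Fin (n+1) → ℝ,
        Fin.cons (((Fin.insertNthEquiv (fun _ : Fin (n+1) => ℝ) 0).symm x).1)
          (((Fin.insertNthEquiv (fun _ : Fin (n+1) => ℝ) 0).symm x).2) = x := by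
      intro x
      simp [Fin.insertNthEquiv_zero]
    have hpre : (MeasurableEquiv.piFinSuccAbove (fun _ : Fin (n+1) => ℝ) 0) ⁻¹'
        (Prod.swap ⁻¹' T) = {x : Fin (n+1) → ℝ | MvPolynomial.eval x p = 0} := by
      ext x
      simp only [Set.mem_preimage, Set.mem_setOf_eq, hT, MeasurableEquiv.piFinSuccAbove,
        MeasurableEquiv.coe_mk, Prod.swap]
      change MvPolynomial.eval (Fin.cons (((Fin.insertNthEquiv (fun _ : Fin (n+1) => ℝ) 0).symm x).1)
          (((Fin.insertNthEquiv (fun _ : Fin (n+1) => ℝ) 0).symm x).2)) p = 0 ↔ _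
      rw [key x]
    have hswapm : MeasurableSet (Prod.swap ⁻¹' T : Set (ℝ × (Fin n → ℝ))) :=
      hTm.preimage measurable_swap
    have h1 : volume {x : Fin (n+1) → ℝ | MvPolynomial.eval x p = 0}
        = (volume : Measure (ℝ × (Fin n → ℝ))) (Prod.swap ⁻¹' T) := by
      rw [← hpre]
      exact e.measure_preimage hswapm.nullMeasurableSet
    rw [h1, Measure.volume_eq_prod, ← Measure.map_apply measurable_swap hTm,
      Measure.prod_swap, Measure.measure_prod_null hTm]
    -- now slices
    filter_upwards [ih (q.coeff k) hk] with y hy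
    have hr : (q.map (MvPolynomial.eval y)) ≠ 0 := by
      intro h
      apply hy
      have := congrArg (fun r => Polynomial.coeff r k) h
      simpa [Polynomial.coeff_map] using this
    have hfin : Set.Finite {a : ℝ | Polynomial.eval a (q.map (MvPolynomial.eval y)) = 0} :=
      Polynomial.finite_setOf_isRoot hr
    have : (Prod.mk y ⁻¹' T) = {a : ℝ | Polynomial.eval a (q.map (MvPolynomial.eval y)) = 0} := by
      ext a
      simp only [Set.mem_preimage, hT, Set.mem_setOf_eq]
      rw [MvPolynomial.eval_eq_eval_mv_eval']
    rw [this]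
    exact hfin.measure_zero _

def idxEquiv (n m : ℕ) : (Fin m ⊕ Fin n × Fin m) ≃ (Fin (n+1) × Fin m) where
  toFun := Sum.elim (fun r => (0, r)) (fun jr => (jr.1.succ, jr.2))
  invFun := fun ir =>
    Fin.cases (motive := fun _ => Fin m ⊕ Fin n × Fin m) (Sum.inl ir.2)
      (fun j => Sum.inr (j, ir.2)) ir.1
  left_inv := by rintro (r | ⟨j, r⟩) <;> simp
  right_inv := by
    rintro ⟨i, r⟩
    induction i using Fin.cases <;> simp

lemma measurePreserving_curry (m n : ℕ) :
    ∃ Φ : (Fin n × Fin m → ℝ) → (Fin n → Fin m → ℝ),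
      MeasurePreserving Φ volume volume ∧ ∀ x i r, Φ x i r = x (i, r) := by
  induction n with
  | zero =>
    refine ⟨fun _ i _ => Fin.elim0 i, ⟨measurable_const, ?_⟩, fun x i r => Fin.elim0 i⟩
    rw [Measure.map_const,
      show (volume : Measure (Fin 0 × Fin m → ℝ)) = Measure.dirac isEmptyElim from
        Measure.volume_pi_eq_dirac _,
      show (volume : Measure (Fin 0 → Fin m → ℝ)) = Measure.dirac isEmptyElim from
        Measure.volume_pi_eq_dirac _, measure_univ, one_smul]
    exact congrArg _ (Subsingleton.elim _ _)
  | succ n ih =>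
    obtain ⟨Φn, hΦn, hΦn'⟩ := ih
    set e := idxEquiv n m with he
    have h1 := ((volume_measurePreserving_piCongrLeft (fun _ : Fin (n+1) × Fin m => ℝ) e).symm)
    have h2 := volume_measurePreserving_sumPiEquivProdPi (fun _ : Fin m ⊕ Fin n × Fin m => ℝ)
    have h3 : MeasurePreserving (Prod.map (id : (Fin m → ℝ) → (Fin m → ℝ)) Φn)
        volume volume := by
      rw [Measure.volume_eq_prod, Measure.volume_eq_prod]
      exact (MeasurePreserving.id volume).prod hΦn
    have h4 := (volume_preserving_piFinSuccAbove (fun _ : Fin (n+1) => (Fin m → ℝ)) 0).symm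
    have hcomp := h4.comp (h3.comp (h2.comp h1))
    refine ⟨_, hcomp, ?_⟩
    intro x i r
    show ((MeasurableEquiv.piFinSuccAbove (fun _ : Fin (n+1) => (Fin m → ℝ)) 0).symm
      (Prod.map id Φn ((MeasurableEquiv.sumPiEquivProdPi (fun _ => ℝ))
        ((MeasurableEquiv.piCongrLeft (fun _ : Fin (n+1) × Fin m => ℝ) e).symm x)))) i r = _
    induction i using Fin.cases with
    | zero =>
      simp [MeasurableEquiv.piFinSuccAbove, MeasurableEquiv.sumPiEquivProdPi,
        Equiv.sumPiEquivProdPi, Equiv.piCongrLeft_symm_apply, he, idxEquiv,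
        MeasurableEquiv.piCongrLeft, Fin.insertNthEquiv]
    | succ j =>
      simp [MeasurableEquiv.piFinSuccAbove, MeasurableEquiv.sumPiEquivProdPi,
        Equiv.sumPiEquivProdPi, Equiv.piCongrLeft_symm_apply, he, idxEquiv,
        MeasurableEquiv.piCongrLeft, Fin.insertNthEquiv, hΦn']

lemma ae_eval_ne_zero_curry (d_z d_x : ℕ) (p : MvPolynomial (Fin d_z × Fin d_x) ℝ)
    (hp : p ≠ 0) :
    ∀ᵐ A ∂(volume : Measure (Fin d_z → Fin d_x → ℝ)),
      MvPolynomial.eval (fun ir => A ir.1 ir.2) p ≠ 0 := by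
  have e : Fin (Fintype.card (Fin d_z × Fin d_x)) ≃ (Fin d_z × Fin d_x) :=
    (Fintype.equivFin _).symm
  have hq : MvPolynomial.rename (⇑e.symm) p ≠ 0 := by
    intro h
    exact hp (MvPolynomial.rename_injective _ e.symm.injective (by rw [h, map_zero]))
  have h1 : (volume : Measure (Fin (Fintype.card (Fin d_z × Fin d_x)) → ℝ))
      {x | MvPolynomial.eval x (MvPolynomial.rename (⇑e.symm) p) = 0} = 0 := by
    have := ae_eval_ne_zero_fin _ _ hq
    rw [MeasureTheory.ae_iff] at this
    simpa using this
  -- transfer to (Fin d_z × Fin d_x) → ℝ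
  have hS1m : MeasurableSet {y : (Fin d_z × Fin d_x) → ℝ | MvPolynomial.eval y p = 0} :=
    (isClosed_eq (MvPolynomial.continuous_eval p) continuous_const).measurableSet
  have hψ := volume_measurePreserving_piCongrLeft (fun _ : Fin d_z × Fin d_x => ℝ) e
  have hpre1 : (MeasurableEquiv.piCongrLeft (fun _ : Fin d_z × Fin d_x => ℝ) e) ⁻¹'
      {y : (Fin d_z × Fin d_x) → ℝ | MvPolynomial.eval y p = 0}
      = {x | MvPolynomial.eval x (MvPolynomial.rename (⇑e.symm) p) = 0} := by
    ext x
    simp only [Set.mem_preimage, Set.mem_setOf_eq, MvPolynomial.eval_rename]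
    have : ⇑(MeasurableEquiv.piCongrLeft (fun _ : Fin d_z × Fin d_x => ℝ) e) x = fun i => x (e.symm i) := by
      funext i
      rw [MeasurableEquiv.coe_piCongrLeft]
      conv_lhs => rw [show i = e (e.symm i) by simp]
      rw [Equiv.piCongrLeft_apply_apply]
    rw [this]
    rfl
  have h2 : (volume : Measure ((Fin d_z × Fin d_x) → ℝ)) {y | MvPolynomial.eval y p = 0} = 0 := by
    rw [← hψ.measure_preimage hS1m.nullMeasurableSet, hpre1, h1]
  -- transfer to curried space
  obtain ⟨Φ, hΦ, hΦ'⟩ := measurePreserving_curry d_x d_z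
  have hSm : MeasurableSet {A : Fin d_z → Fin d_x → ℝ |
      MvPolynomial.eval (fun ir : Fin d_z × Fin d_x => A ir.1 ir.2) p = 0} := by
    apply (isClosed_eq ?_ continuous_const).measurableSet
    apply (MvPolynomial.continuous_eval p).comp
    exact continuous_pi fun ir => (continuous_apply ir.2).comp (continuous_apply ir.1)
  have hpre2 : Φ ⁻¹' {A : Fin d_z → Fin d_x → ℝ |
      MvPolynomial.eval (fun ir : Fin d_z × Fin d_x => A ir.1 ir.2) p = 0}
      = {y : (Fin d_z × Fin d_x) → ℝ | MvPolynomial.eval y p = 0} := by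
    ext x
    simp only [Set.mem_preimage, Set.mem_setOf_eq]
    have : (fun ir : Fin d_z × Fin d_x => Φ x ir.1 ir.2) = x := by
      funext ir
      rw [hΦ']
    rw [this]
  rw [MeasureTheory.ae_iff]
  simp only [not_not]
  rw [← hΦ.measure_preimage hSm.nullMeasurableSet, hpre2, h2]

/-- the linear functional `x ↦ a ⬝ᵥ C *ᵥ x`. -/
noncomputable def dotMulLin {d : ℕ} (a : Fin d → ℝ) (C : Matrix (Fin d) (Fin d) ℝ) :
    (Fin d → ℝ) →ₗ[ℝ] ℝ where
  toFun x := a ⬝ᵥ C *ᵥ x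
  map_add' x y := by show a ⬝ᵥ C *ᵥ (x + y) = _; rw [mulVec_add, dotProduct_add]
  map_smul' c x := by show a ⬝ᵥ C *ᵥ (c • x) = _; rw [mulVec_smul, dotProduct_smul]; rfl

lemma exists_ortho_family (d_z d_x : ℕ) (hdx : d_z ^ 3 ≤ d_x)
    (B : Fin d_z → Matrix (Fin d_x) (Fin d_x) ℝ) (hB : ∀ s, (B s)ᵀ = B s) :
    ∃ v : Fin d_z → Fin d_z → (Fin d_x → ℝ),
      (∀ j, LinearIndependent ℝ (v j)) ∧
      (∀ i j, i ≠ j → ∀ s k l, v i k ⬝ᵥ (B s) *ᵥ (v j l) = 0) := by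
  suffices h : ∀ m, m ≤ d_z → ∃ v : Fin m → Fin d_z → (Fin d_x → ℝ),
      (∀ j, LinearIndependent ℝ (v j)) ∧
      (∀ i j : Fin m, i < j → ∀ s k l, v i k ⬝ᵥ (B s) *ᵥ (v j l) = 0) by
    obtain ⟨v, hLI, hortho⟩ := h d_z le_rfl
    refine ⟨v, hLI, fun i j hij s k l => ?_⟩
    rcases lt_or_gt_of_ne hij with h' | h'
    · exact hortho i j h' s k l
    · have := hortho j i h' s l k
      calc v i k ⬝ᵥ B s *ᵥ v j l
          = (v i k ᵥ* B s) ⬝ᵥ v j l := dotProduct_mulVec _ _ _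
        _ = (v i k ᵥ* (B s)ᵀ) ⬝ᵥ v j l := by rw [hB]
        _ = (B s *ᵥ v i k) ⬝ᵥ v j l := by rw [vecMul_transpose]
        _ = v j l ⬝ᵥ B s *ᵥ v i k := dotProduct_comm _ _
        _ = 0 := this
  intro m
  induction m with
  | zero => exact fun _ => ⟨Fin.elim0, fun j => j.elim0, fun i => i.elim0⟩
  | succ n ih =>
    intro hm
    obtain ⟨v, hLI, hortho⟩ := ih (le_trans (Nat.le_succ n) hm)
    -- the space of vectors orthogonal to all previous blocks
    set Φ : (Fin d_x → ℝ) →ₗ[ℝ] (Fin n × Fin d_z × Fin d_z → ℝ) :=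
      LinearMap.pi (fun t => dotMulLin (v t.1 t.2.2) (B t.2.1)) with hΦ
    set W := LinearMap.ker Φ with hW
    have hdim : d_z ≤ Module.finrank ℝ W := by
      have h1 : Module.finrank ℝ (LinearMap.range Φ) + Module.finrank ℝ W = d_x := by
        rw [hW, LinearMap.finrank_range_add_finrank_ker]
        simp
      have h2 : Module.finrank ℝ (LinearMap.range Φ) ≤ n * (d_z * d_z) := by
        calc Module.finrank ℝ (LinearMap.range Φ)
            ≤ Module.finrank ℝ (Fin n × Fin d_z × Fin d_z → ℝ) := Submodule.finrank_le _
          _ = n * (d_z * d_z) := by simp [Module.finrank_pi]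
      have h4 : n * (d_z * d_z) + d_z ≤ d_x := by
        have hn : n + 1 ≤ d_z := hm
        nlinarith [pow_succ d_z 2, sq_nonneg d_z]
      omega
    obtain ⟨f, hf⟩ := exists_linearIndependent_of_le_finrank (R := ℝ) (M := W) hdim
    -- new block of vectors
    set w : Fin d_z → (Fin d_x → ℝ) := fun k => (f k : Fin d_x → ℝ) with hw
    have hwLI : LinearIndependent ℝ w := hf.map' W.subtype W.ker_subtype
    have hwmem : ∀ k, Φ (w k) = 0 := fun k => (f k).2
    refine ⟨Fin.snoc v w, ?_, ?_⟩
    · intro j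
      induction j using Fin.lastCases with
      | last => simpa [Fin.snoc_last] using hwLI
      | cast i => simpa [Fin.snoc_castSucc] using hLI i
    · intro i j hij s k l
      induction j using Fin.lastCases with
      | last =>
        induction i using Fin.lastCases with
        | last => exact absurd hij (lt_irrefl _)
        | cast i' =>
          rw [Fin.snoc_castSucc, Fin.snoc_last]
          have := congrFun (hwmem l) (i', s, k)
          simp only [hΦ, LinearMap.pi_apply, dotMulLin, LinearMap.coe_mk, AddHom.coe_mk,
            Pi.zero_apply] at this
          exact this
      | cast j' =>
        induction i using Fin.lastCases with
        | last => exact absurd hij (not_lt.mpr (Fin.le_last _))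
        | cast i' =>
          rw [Fin.snoc_castSucc, Fin.snoc_castSucc]
          exact hortho i' j' (Fin.castSucc_lt_castSucc_iff.mp hij) s k l

-- helper sum lemmas
lemma dot_sum_right {ι κ : Type*} [Fintype ι] [Fintype κ] (u : ι → ℝ) (x : κ → ι → ℝ) :
    u ⬝ᵥ (∑ l, x l) = ∑ l, u ⬝ᵥ (x l) := by
  simp only [dotProduct, Finset.sum_apply, Finset.mul_sum]
  exact Finset.sum_comm

lemma mulVec_sum_right {ι κ : Type*} [Fintype ι] [Fintype κ] (C : Matrix ι ι ℝ)
    (x : κ → ι → ℝ) : C *ᵥ (∑ l, x l) = ∑ l, C *ᵥ (x l) := by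
  funext q
  simp only [Matrix.mulVec, dotProduct, Finset.sum_apply, Finset.mul_sum]
  exact Finset.sum_comm

lemma dot_sum_left {ι κ : Type*} [Fintype ι] [Fintype κ] (x : κ → ι → ℝ) (u : ι → ℝ) :
    (∑ l, x l) ⬝ᵥ u = ∑ l, (x l) ⬝ᵥ u := by
  simp only [dotProduct, Finset.sum_apply, Finset.sum_mul]
  exact Finset.sum_comm

/-- Assume `d_x ≥ d_z³`, `d_z ≥ 1`, and let `B₁,…,B_{d_z}` be symmetric `d_x × d_x` matrices.
Then for Lebesgue-almost every `A ∈ ℝ^{d_z × d_x}` there exists `M ∈ ℝ^{d_x × d_z}` with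
`A·M = I` and `Mᵀ·B_s·M` diagonal for every `s`. -/
theorem almost_every_A_admits_diagonalizing_right_inverse (d_z d_x : ℕ)
    (hdz : 1 ≤ d_z) (hdx : d_z ^ 3 ≤ d_x)
    (B : Fin d_z → Matrix (Fin d_x) (Fin d_x) ℝ) (hB : ∀ s, (B s)ᵀ = B s) :
    ∀ᵐ A ∂(volume : Measure (Fin d_z → Fin d_x → ℝ)),
      ∃ M : Matrix (Fin d_x) (Fin d_z) ℝ,
        Matrix.of A * M = 1 ∧ ∀ s : Fin d_z, (Mᵀ * B s * M).IsDiag := by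
  classical
  obtain ⟨v, hLI, hortho⟩ := exists_ortho_family d_z d_x hdx B hB
  -- the fixed matrices with columns `v j k`
  set P : Fin d_z → Matrix (Fin d_x) (Fin d_z) ℝ :=
    fun j => Matrix.of (fun r k => v j k r) with hP
  -- injectivity of each P j
  have hPinj : ∀ j (x : Fin d_z → ℝ), P j *ᵥ x = 0 → x = 0 := by
    intro j x hx
    have hsum : ∑ k, x k • v j k = 0 := by
      funext r
      have := congrFun hx r
      simpa [hP, Matrix.mulVec, dotProduct, Finset.sum_apply, mul_comm] using this
    exact funext (Fintype.linearIndependent_iff.mp (hLI j) x hsum)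
  -- the generic polynomial
  set N : Fin d_z → Matrix (Fin d_z) (Fin d_z) (MvPolynomial (Fin d_z × Fin d_x) ℝ) :=
    fun j => Matrix.of (fun i k =>
      ∑ r, MvPolynomial.X (i, r) * MvPolynomial.C (v j k r)) with hN
  have hmap : ∀ (a : Fin d_z × Fin d_x → ℝ) j,
      (MvPolynomial.eval a).mapMatrix (N j)
        = Matrix.of (fun i k => ∑ r, a (i, r) * v j k r) := by
    intro a j
    ext i k
    simp [hN, RingHom.mapMatrix_apply]
  have hdet : ∀ j, (N j).det ≠ 0 := by
    intro j hdet0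
    -- evaluate at the transpose witness
    set a : Fin d_z × Fin d_x → ℝ := fun ir => v j ir.1 ir.2 with ha
    have h1 : ((MvPolynomial.eval a).mapMatrix (N j)).det = 0 := by
      rw [← RingHom.map_det, hdet0, map_zero]
    have h2 : (MvPolynomial.eval a).mapMatrix (N j) = (P j)ᵀ * P j := by
      rw [hmap]
      ext i k
      simp [Matrix.mul_apply, hP, ha]
    rw [h2] at h1
    obtain ⟨x, hx0, hx⟩ := (Matrix.exists_mulVec_eq_zero_iff).mpr h1
    have h3 : (P j *ᵥ x) ⬝ᵥ (P j *ᵥ x) = 0 := by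
      calc (P j *ᵥ x) ⬝ᵥ (P j *ᵥ x)
          = (x ᵥ* (P j)ᵀ) ⬝ᵥ (P j *ᵥ x) := by rw [vecMul_transpose]
        _ = x ⬝ᵥ ((P j)ᵀ *ᵥ (P j *ᵥ x)) := (dotProduct_mulVec _ _ _).symm
        _ = x ⬝ᵥ (((P j)ᵀ * P j) *ᵥ x) := by rw [mulVec_mulVec]
        _ = x ⬝ᵥ (0 : Fin d_z → ℝ) := by rw [hx]
        _ = 0 := dotProduct_zero _
    exact hx0 (hPinj j x (dotProduct_self_eq_zero.mp h3))
  have hp : (∏ j, (N j).det) ≠ 0 :=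
    Finset.prod_ne_zero_iff.mpr (fun j _ => hdet j)
  filter_upwards [ae_eval_ne_zero_curry d_z d_x _ hp] with A hA
  -- each Q j := of A * P j is invertible
  have hQdet : ∀ j, (Matrix.of A * P j).det ≠ 0 := by
    intro j
    have h1 : MvPolynomial.eval (fun ir => A ir.1 ir.2) (∏ j, (N j).det)
        = ∏ j, (Matrix.of A * P j).det := by
      rw [map_prod]
      congr 1
      funext j
      rw [RingHom.map_det, hmap]
      congr 1
    rw [h1] at hA
    exact Finset.prod_ne_zero_iff.mp hA j (Finset.mem_univ j)
  have hQunit : ∀ j, IsUnit (Matrix.of A * P j).det := fun j =>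
    isUnit_iff_ne_zero.mpr (hQdet j)
  -- construct M
  set c : Fin d_z → (Fin d_z → ℝ) :=
    fun j => (Matrix.of A * P j)⁻¹ *ᵥ Pi.single j 1 with hc
  set col : Fin d_z → (Fin d_x → ℝ) := fun j => P j *ᵥ c j with hcol
  refine ⟨Matrix.of (fun r j => col j r), ?_, ?_⟩
  · ext i j
    have h1 : (Matrix.of A * Matrix.of (fun r j => col j r)) i j
        = (Matrix.of A *ᵥ col j) i := by
      simp [Matrix.mul_apply, Matrix.mulVec, dotProduct]
    rw [h1, hcol]
    have h2 : (Matrix.of A) *ᵥ (P j *ᵥ c j) = (Matrix.of A * P j) *ᵥ c j :=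
      mulVec_mulVec _ _ _
    rw [h2, hc]
    rw [mulVec_mulVec, Matrix.mul_nonsing_inv _ (hQunit j), one_mulVec]
    rw [Matrix.one_apply, Pi.single_apply]
  · intro s i j hij
    have hcolsum : ∀ t, col t = ∑ k, c t k • v t k := by
      intro t
      funext r
      simp [hcol, hP, Matrix.mulVec, dotProduct, Finset.sum_apply, mul_comm]
    have hentry : ((Matrix.of (fun r j => col j r))ᵀ * B s * Matrix.of (fun r j => col j r)) i j
        = col i ⬝ᵥ (B s *ᵥ col j) := by
      rw [Matrix.mul_assoc]
      simp [Matrix.mul_apply, Matrix.mulVec, dotProduct, Matrix.transpose_apply]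
    rw [hentry, hcolsum i, hcolsum j, mulVec_sum_right, dot_sum_right]
    apply Finset.sum_eq_zero
    intro l _
    have hz : (∑ k, c i k • v i k) ⬝ᵥ (B s *ᵥ v j l) = 0 := by
      rw [dot_sum_left]
      apply Finset.sum_eq_zero
      intro k _
      rw [smul_dotProduct, hortho i j hij s k l, smul_zero]
    rw [mulVec_smul, dotProduct_smul, hz, smul_zero]
end

section
/- Assume d_x ≥ d_z³ with d_z ≥ 1, and let B_1,…,B_{d_z} ∈ ℝ^{d_x×d_x} be symmetric matrices. Then there exist linear subspaces V_1,…,V_{d_z} ⊆ ℝ^{d_x}, each of dimension d_z, such that for all i ≠ j in {1,…,d_z}, all s ∈ {1,…,d_z}, and all vectors v ∈ V_i and w ∈ V_j, one has vᵀ·B_s·w = 0. -/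
open Matrix

private lemma aux_mutually_B_orth (d_z d_x : ℕ) (hdz : 1 ≤ d_z) (hdx : d_z ^ 3 ≤ d_x)
    (B : Fin d_z → Matrix (Fin d_x) (Fin d_x) ℝ) (hB : ∀ s, (B s)ᵀ = B s) :
    ∀ k, k ≤ d_z → ∃ V : Fin k → Submodule ℝ (Fin d_x → ℝ),
      (∀ i, Module.finrank ℝ (V i) = d_z) ∧
      ∀ i j : Fin k, i ≠ j → ∀ s : Fin d_z, ∀ v ∈ V i, ∀ w ∈ V j,
        v ⬝ᵥ (B s) *ᵥ w = 0 := by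
  intro k
  induction k with
  | zero => exact fun _ => ⟨Fin.elim0, fun i => i.elim0, fun i => i.elim0⟩
  | succ k ih =>
    intro hk
    obtain ⟨V, hVdim, hVorth⟩ := ih (le_trans (Nat.le_succ k) hk)
    -- basis of each V j
    have : ∀ j, FiniteDimensional ℝ (V j) := fun j => FiniteDimensional.finiteDimensional_submodule _
    let b : ∀ j : Fin k, Module.Basis (Fin d_z) ℝ (V j) := fun j =>
      (Module.finBasis ℝ (V j)).reindex (finCongr (hVdim j))
    -- the linear map collecting all orthogonality constraints
    let T : (Fin d_x → ℝ) →ₗ[ℝ] (Fin k × Fin d_z × Fin d_z → ℝ) :=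
      { toFun := fun w p => ((b p.1 p.2.1 : Fin d_x → ℝ)) ⬝ᵥ (B p.2.2) *ᵥ w
        map_add' := by intro x y; funext p; simp [mulVec_add, dotProduct_add]
        map_smul' := by intro c x; funext p; simp [mulVec_smul, dotProduct_smul] }
    have hker : d_z ≤ Module.finrank ℝ (LinearMap.ker T) := by
      have h1 := LinearMap.finrank_range_add_finrank_ker T
      have h2 : Module.finrank ℝ (LinearMap.range T) ≤ k * (d_z * d_z) := by
        calc Module.finrank ℝ (LinearMap.range T)
            ≤ Module.finrank ℝ (Fin k × Fin d_z × Fin d_z → ℝ) :=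
              (LinearMap.range T).finrank_le
          _ = k * (d_z * d_z) := by simp
      have h3 : k * (d_z * d_z) + d_z * d_z ≤ d_x := by
        calc k * (d_z * d_z) + d_z * d_z = (k + 1) * (d_z * d_z) := by ring
          _ ≤ d_z * (d_z * d_z) := Nat.mul_le_mul_right _ hk
          _ = d_z ^ 3 := by ring
          _ ≤ d_x := hdx
      have h4 : d_z ≤ d_z * d_z := Nat.le_mul_of_pos_left _ hdz
      have h5 : Module.finrank ℝ (Fin d_x → ℝ) = d_x := by simp
      rw [h5] at h1
      omega
    -- pick a d_z-dimensional subspace of the kernel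
    haveI : FiniteDimensional ℝ (LinearMap.ker T) := inferInstance
    let c : Module.Basis (Fin (Module.finrank ℝ (LinearMap.ker T))) ℝ (LinearMap.ker T) :=
      Module.finBasis ℝ _
    let f : Fin d_z → (Fin d_x → ℝ) := fun t => (c (Fin.castLE hker t) : Fin d_x → ℝ)
    have hf_li : LinearIndependent ℝ f := by
      have := (c.linearIndependent.comp (Fin.castLE hker) (Fin.castLE_injective hker)).map'
        (LinearMap.ker T).subtype (Submodule.ker_subtype _)
      exact this
    let W : Submodule ℝ (Fin d_x → ℝ) := Submodule.span ℝ (Set.range f)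
    have hWdim : Module.finrank ℝ W = d_z := by
      rw [finrank_span_eq_card hf_li]; simp
    have hWker : W ≤ LinearMap.ker T := by
      rw [Submodule.span_le]
      rintro _ ⟨t, rfl⟩
      exact (c (Fin.castLE hker t)).2
    -- key: w ∈ W is B-orthogonal to everything in every V j
    have hkey : ∀ (j : Fin k) (s : Fin d_z), ∀ v ∈ V j, ∀ w ∈ W, v ⬝ᵥ (B s) *ᵥ w = 0 := by
      intro j s v hv w hw
      have hwker : T w = 0 := hWker hw
      have hbas : ∀ t : Fin d_z, ((b j t : Fin d_x → ℝ)) ⬝ᵥ (B s) *ᵥ w = 0 := by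
        intro t
        have := congrFun hwker (j, t, s)
        exact this
      -- express v in basis b j
      have hrepr := (b j).sum_repr ⟨v, hv⟩
      have : v = ∑ t, ((b j).repr ⟨v, hv⟩ t) • ((b j t : Fin d_x → ℝ)) := by
        have := congrArg (Submodule.subtype (V j)) hrepr
        rw [map_sum] at this
        simp only [map_smul, Submodule.subtype_apply] at this
        exact this.symm
      have hsum : ∀ (g : Fin d_z → Fin d_x → ℝ) (x : Fin d_x → ℝ),
          (∑ t, g t) ⬝ᵥ x = ∑ t, g t ⬝ᵥ x := by
        intro g x
        simp only [dotProduct, Finset.sum_apply, Finset.sum_mul]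
        exact Finset.sum_comm
      rw [this, hsum]
      simp [smul_dotProduct, hbas]
    have hsymm : ∀ (s : Fin d_z) (v w : Fin d_x → ℝ),
        v ⬝ᵥ (B s) *ᵥ w = w ⬝ᵥ (B s) *ᵥ v := by
      intro s v w
      rw [dotProduct_mulVec, dotProduct_comm, ← mulVec_transpose, hB s]
    refine ⟨Fin.snoc V W, ?_, ?_⟩
    · intro i
      refine Fin.lastCases ?_ ?_ i
      · rw [Fin.snoc_last]; exact hWdim
      · intro i; rw [Fin.snoc_castSucc]; exact hVdim i
    · intro i j hij s v hv w hw
      induction i using Fin.lastCases with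
      | last =>
        simp only [Fin.snoc_last] at hv
        induction j using Fin.lastCases with
        | last => exact absurd rfl hij
        | cast j =>
          simp only [Fin.snoc_castSucc] at hw
          rw [hsymm]
          exact hkey j s w hw v hv
      | cast i =>
        simp only [Fin.snoc_castSucc] at hv
        induction j using Fin.lastCases with
        | last =>
          simp only [Fin.snoc_last] at hw
          exact hkey i s v hv w hw
        | cast j =>
          simp only [Fin.snoc_castSucc] at hw
          exact hVorth i j (fun h => hij (by rw [h])) s v hv w hw


/-- Assume `d_x ≥ d_z³`, `d_z ≥ 1`, and let `B₁,…,B_{d_z}` be symmetric `d_x × d_x` matrices.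
Then there exist linear subspaces `V₁,…,V_{d_z} ⊆ ℝ^{d_x}`, each of dimension `d_z`, which are
mutually orthogonal with respect to every bilinear form `B_s`: for `i ≠ j`, `v ∈ V_i`,
`w ∈ V_j`, we have `vᵀ·B_s·w = 0`. -/
theorem exists_mutually_B_orthogonal_subspaces (d_z d_x : ℕ)
    (hdz : 1 ≤ d_z) (hdx : d_z ^ 3 ≤ d_x)
    (B : Fin d_z → Matrix (Fin d_x) (Fin d_x) ℝ) (hB : ∀ s, (B s)ᵀ = B s) :
    ∃ V : Fin d_z → Submodule ℝ (Fin d_x → ℝ),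
      (∀ i, Module.finrank ℝ (V i) = d_z) ∧
      ∀ i j : Fin d_z, i ≠ j → ∀ s : Fin d_z, ∀ v ∈ V i, ∀ w ∈ V j,
        v ⬝ᵥ (B s) *ᵥ w = 0 := by
  exact aux_mutually_B_orth d_z d_x hdz hdx B hB d_z le_rfl
end

section
/- Let d ≥ 2 and let G be a set of continuous functions from ℝ^d to ℝ^d with the following two properties: (i) G is closed under addition, i.e. g₁ + g₂ ∈ G whenever g₁, g₂ ∈ G; (ii) for every coordinate-wise additive homeomorphism f : ℝ^d → ℝ^d, the inverse f^{-1} belongs to G. Then for every compact set K ⊂ ℝ^d, the set of restrictions {g|_K : g ∈ G} is dense in the space C(K, ℝ^d) of continuous functions from K to ℝ^d equipped with the supremum norm. -/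
namespace IAMGDC
open Filter Topology Set

variable {d : ℕ}

def Sd (a z : Fin d → ℝ) : ℝ := ∑ m, a m * z m

lemma Sd_cont (a : Fin d → ℝ) : Continuous (Sd a) := by
  unfold Sd
  exact continuous_finset_sum _ fun m _ => continuous_const.mul (continuous_apply m)

lemma Sd_ite (a : Fin d → ℝ) {i j : Fin d} (hij : i ≠ j) (z : Fin d → ℝ) (X Y : ℝ) :
    Sd a (fun m => if m = i then X else if m = j then Y else z m)
      = Sd a z + a i * (X - z i) + a j * (Y - z j) := by
  unfold Sd
  have key : ∀ m : Fin d, a m * (if m = i then X else if m = j then Y else z m)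
      = a m * z m + (if m = i then a i * (X - z i) else 0)
        + (if m = j then a j * (Y - z j) else 0) := by
    intro m
    by_cases h1 : m = i
    · subst h1; rw [if_pos rfl, if_pos rfl, if_neg hij]; ring
    · rw [if_neg h1, if_neg h1]
      by_cases h2 : m = j
      · subst h2; rw [if_pos rfl, if_pos rfl]; ring
      · rw [if_neg h2, if_neg h2]; ring
  rw [Finset.sum_congr rfl (fun m _ => key m)]
  rw [Finset.sum_add_distrib, Finset.sum_add_distrib]
  simp

lemma Sd_add (a a' z : Fin d → ℝ) : Sd (a + a') z = Sd a z + Sd a' z := by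
  unfold Sd
  rw [← Finset.sum_add_distrib]
  exact Finset.sum_congr rfl fun m _ => by simp [Pi.add_apply]; ring

lemma Sd_sub (a a' z : Fin d → ℝ) : Sd (a - a') z = Sd a z - Sd a' z := by
  unfold Sd
  rw [← Finset.sum_sub_distrib]
  exact Finset.sum_congr rfl fun m _ => by simp [Pi.sub_apply]; ring

lemma Sd_sub_right (a z w : Fin d → ℝ) : Sd a z - Sd a w = Sd a (z - w) := by
  unfold Sd
  rw [← Finset.sum_sub_distrib]
  exact Finset.sum_congr rfl fun m _ => by simp [Pi.sub_apply]; ring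

section SW
variable (K : Set (Fin d → ℝ))

/-- basic cosine functions on K -/
noncomputable def cosFun (a : Fin d → ℝ) (θ : ℝ) : C(↥K, ℝ) :=
  ⟨fun x => Real.cos (Sd a ↑x + θ),
    Real.continuous_cos.comp (((Sd_cont a).comp continuous_subtype_val).add continuous_const)⟩

lemma cosFun_apply (a : Fin d → ℝ) (θ : ℝ) (x : ↥K) :
    cosFun K a θ x = Real.cos (Sd a ↑x + θ) := rfl

def gens : Set C(↥K, ℝ) := {f | ∃ a θ, f = cosFun K a θ}

lemma cos_mul_cos (X Y : ℝ) :
    Real.cos X * Real.cos Y = (Real.cos (X + Y) + Real.cos (X - Y)) / 2 := by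
  rw [Real.cos_add, Real.cos_sub]; ring

lemma gens_mul_mem (f g : C(↥K, ℝ)) (hf : f ∈ gens K) (hg : g ∈ gens K) :
    f * g ∈ Submodule.span ℝ (gens K) := by
  obtain ⟨a, θ, rfl⟩ := hf
  obtain ⟨a', θ', rfl⟩ := hg
  have key : cosFun K a θ * cosFun K a' θ'
      = (1/2 : ℝ) • cosFun K (a + a') (θ + θ') + (1/2 : ℝ) • cosFun K (a - a') (θ - θ') := by
    ext x
    simp only [ContinuousMap.mul_apply, ContinuousMap.add_apply, ContinuousMap.smul_apply,
      cosFun_apply, smul_eq_mul, Sd_add, Sd_sub]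
    rw [cos_mul_cos]
    congr 2 <;> ring
  rw [key]
  exact Submodule.add_mem _
    (Submodule.smul_mem _ _ (Submodule.subset_span ⟨_, _, rfl⟩))
    (Submodule.smul_mem _ _ (Submodule.subset_span ⟨_, _, rfl⟩))

lemma one_mem_gens : (1 : C(↥K, ℝ)) ∈ gens K := by
  refine ⟨0, 0, ?_⟩
  ext x
  simp [cosFun_apply, Sd]

noncomputable def trigAlg : Subalgebra ℝ C(↥K, ℝ) :=
  (Submodule.span ℝ (gens K)).toSubalgebra
    (Submodule.subset_span (one_mem_gens K))
    (by
      intro x y hx hy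
      have hxy : x * y ∈ Submodule.span ℝ (gens K) * Submodule.span ℝ (gens K) :=
        Submodule.mul_mem_mul hx hy
      have hle : Submodule.span ℝ (gens K) * Submodule.span ℝ (gens K)
          ≤ Submodule.span ℝ (gens K) := by
        rw [Submodule.span_mul_span]
        apply Submodule.span_le.2
        rintro _ ⟨f, hf, g, hg, rfl⟩
        exact gens_mul_mem K f g hf hg
      exact hle hxy)

lemma trigAlg_separates : (trigAlg K).SeparatesPoints := by
  intro x y hxy
  have hval : (x : Fin d → ℝ) ≠ (y : Fin d → ℝ) := Subtype.coe_injective.ne hxy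
  set w : Fin d → ℝ := (x : Fin d → ℝ) - (y : Fin d → ℝ) with hw
  have hδpos : 0 < Sd w w := by
    obtain ⟨m, hm⟩ := Function.ne_iff.mp hval
    apply Finset.sum_pos'
    · intro m' _; exact mul_self_nonneg _
    · refine ⟨m, Finset.mem_univ m, ?_⟩
      have : w m ≠ 0 := by
        simp only [hw, Pi.sub_apply]
        exact sub_ne_zero_of_ne hm
      exact mul_self_pos.2 this
  set δ : ℝ := Sd w w with hδ
  set a : Fin d → ℝ := fun m => (Real.pi / (2 * δ)) * w m with ha
  have haS : ∀ z : Fin d → ℝ, Sd a z = (Real.pi / (2 * δ)) * Sd w z := by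
    intro z
    simp only [ha, Sd, Finset.mul_sum]
    exact Finset.sum_congr rfl fun m _ => by ring
  refine ⟨⇑(cosFun K a (-(Sd a ↑y))), ⟨cosFun K a (-(Sd a ↑y)),
    Submodule.subset_span ⟨_, _, rfl⟩, rfl⟩, ?_⟩
  simp only [cosFun_apply]
  have hy0 : Real.cos (Sd a ↑y + -(Sd a ↑y)) = 1 := by
    rw [add_neg_cancel, Real.cos_zero]
  have hx0 : Real.cos (Sd a ↑x + -(Sd a ↑y)) = 0 := by
    have h1 : Sd a ↑x + -(Sd a ↑y) = Real.pi / 2 := by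
      rw [← sub_eq_add_neg, haS, haS, ← mul_sub, Sd_sub_right, ← hw, ← hδ]
      field_simp
    rw [h1, Real.cos_pi_div_two]
  rw [hx0, hy0]
  norm_num

end SW

noncomputable def mkHomeo (g : ℝ → ℝ) (hm : StrictMono g) (hs : Function.Surjective g) :
    ℝ ≃ₜ ℝ :=
  (StrictMono.orderIsoOfSurjective g hm hs).toHomeomorph

lemma mkHomeo_apply (g : ℝ → ℝ) (hm : StrictMono g) (hs : Function.Surjective g) (t : ℝ) :
    mkHomeo g hm hs t = g t := rfl

lemma lipschitz_decomp (f : ℝ → ℝ) (L : NNReal) (hf : LipschitzWith L f) :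
    ∃ p q : ℝ ≃ₜ ℝ, ∀ t, f t = 2 * p t - 2 * q t := by
  have hfc : Continuous f := hf.continuous
  set c : ℝ := (L : ℝ) + 1 with hc
  have hLnn : (0:ℝ) ≤ (L : ℝ) := L.coe_nonneg
  have hcpos : 0 < c := by positivity
  have hbound : ∀ s t : ℝ, |f s - f t| ≤ (L : ℝ) * |s - t| := by
    intro s t
    have := hf.dist_le_mul s t
    rwa [Real.dist_eq, Real.dist_eq] at this
  set P : ℝ → ℝ := fun t => (f t + c * t) / 2 with hP
  have hmono : StrictMono P := by
    intro s t hst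
    have h1 : f s - f t ≤ (L : ℝ) * (t - s) := by
      have h2 := hbound s t
      have habs : |s - t| = t - s := by
        rw [abs_sub_comm, abs_of_pos (by linarith)]
      rw [habs] at h2
      nlinarith [le_abs_self (f s - f t)]
    simp only [hP, hc]
    nlinarith
  have hcont : Continuous P :=
    (hfc.add (continuous_const.mul continuous_id)).div_const 2
  have hfl : ∀ t : ℝ, f 0 - (L:ℝ) * |t| ≤ f t := by
    intro t
    have h2 := hbound 0 t
    have := neg_abs_le (f 0 - f t)
    rw [abs_sub_comm 0 t] at h2
    simp only [sub_zero] at h2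
    nlinarith [le_abs_self (f 0 - f t), neg_abs_le (f 0 - f t)]
  have hfu : ∀ t : ℝ, f t ≤ f 0 + (L:ℝ) * |t| := by
    intro t
    have h2 := hbound t 0
    simp only [sub_zero] at h2
    nlinarith [le_abs_self (f t - f 0)]
  have hsurj : Function.Surjective P := by
    apply Continuous.surjective hcont
    · -- Tendsto P atTop atTop
      have hev : (fun t => (f 0 + t) / 2) ≤ᶠ[atTop] P := by
        filter_upwards [eventually_ge_atTop (0:ℝ)] with t ht
        have := hfl t
        rw [abs_of_nonneg ht] at this
        simp only [hP, hc]
        nlinarith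
      refine tendsto_atTop_mono' atTop hev ?_
      apply Tendsto.atTop_div_const (by norm_num)
      exact tendsto_atTop_add_const_left _ _ tendsto_id
    · -- Tendsto P atBot atBot
      have hev : P ≤ᶠ[atBot] (fun t => (f 0 + t) / 2) := by
        filter_upwards [eventually_le_atBot (0:ℝ)] with t ht
        have := hfu t
        rw [abs_of_nonpos ht] at this
        simp only [hP, hc]
        nlinarith
      refine tendsto_atBot_mono' atBot hev ?_
      apply Tendsto.atBot_div_const (by norm_num)
      exact tendsto_atBot_add_const_left _ _ tendsto_id
  set Q : ℝ → ℝ := fun t => (c * t) / 2 with hQ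
  have hmonoQ : StrictMono Q := by
    intro s t hst
    simp only [hQ]
    nlinarith
  have hsurjQ : Function.Surjective Q := by
    intro y
    refine ⟨2 * y / c, ?_⟩
    simp only [hQ]
    field_simp
  refine ⟨mkHomeo P hmono hsurj, mkHomeo Q hmonoQ hsurjQ, ?_⟩
  intro t
  rw [mkHomeo_apply, mkHomeo_apply]
  simp only [hP, hQ]
  ring
lemma cont_approx_lipschitz (φ : ℝ → ℝ) (hφ : Continuous φ) (R : ℝ) (hR : 0 ≤ R)
    (ε : ℝ) (hε : 0 < ε) :
    ∃ (L : NNReal) (f : ℝ → ℝ), LipschitzWith L f ∧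
      ∀ t ∈ Set.Icc (-R) R, |f t - φ t| < ε := by
  have hRR : (-R) ≤ R := by linarith
  obtain ⟨P, hP⟩ := exists_polynomial_near_of_continuousOn (-R) R φ hφ.continuousOn ε hε
  set clamp : ℝ → ℝ := fun t => ((Set.projIcc (-R) R hRR t : Set.Icc (-R) R) : ℝ)
    with hclamp
  have hclampLip : LipschitzWith 1 clamp := by
    have h1 := LipschitzWith.projIcc hRR
    have h2 := (LipschitzWith.subtype_val (s := Set.Icc (-R) R)).comp h1
    rw [mul_one] at h2
    exact h2
  have hclampmem : ∀ t, clamp t ∈ Set.Icc (-R) R := fun t => (Set.projIcc (-R) R hRR t).2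
  have hclampid : ∀ t ∈ Set.Icc (-R) R, clamp t = t := by
    intro t ht
    simp only [hclamp, Set.projIcc_of_mem hRR ht]
  -- Lipschitz bound for the polynomial on the interval
  have hderiv_cont : ContinuousOn (fun x => (P.derivative).eval x) (Set.Icc (-R) R) :=
    (Polynomial.continuous _).continuousOn
  obtain ⟨C, hC⟩ := (isCompact_Icc (a := -R) (b := R)).exists_bound_of_continuousOn hderiv_cont
  have hlipOn : LipschitzOnWith C.toNNReal (fun x => P.eval x) (Set.Icc (-R) R) := by
    apply Convex.lipschitzOnWith_of_nnnorm_deriv_le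
      (fun x _ => (Polynomial.differentiable P).differentiableAt)
    · intro x hx
      rw [Polynomial.deriv, ← norm_toNNReal]
      exact Real.toNNReal_le_toNNReal (hC x hx)
    · exact convex_Icc _ _
  set f : ℝ → ℝ := fun t => P.eval (clamp t) with hf
  have hfLip : LipschitzWith (C.toNNReal * 1) f := by
    have := hlipOn.comp (hclampLip.lipschitzOnWith (s := Set.univ))
      (fun t _ => hclampmem t)
    rw [lipschitzOnWith_univ] at this
    exact this
  refine ⟨C.toNNReal * 1, f, hfLip, ?_⟩
  intro t ht
  simp only [hf, hclampid t ht]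
  exact hP t ht

section Gsection
variable (G : Set ((Fin d → ℝ) → (Fin d → ℝ)))
variable (hGadd : ∀ g₁ ∈ G, ∀ g₂ ∈ G, g₁ + g₂ ∈ G)
variable (hGinv : ∀ f : (Fin d → ℝ) ≃ₜ (Fin d → ℝ), CoordAdditive ⇑f → ⇑f.symm ∈ G)

include hGinv in
lemma diag_mem (c : Fin d → ℝ) (hc : ∀ k, c k ≠ 0) :
    (fun z k => c k * z k) ∈ G := by
  let F : (Fin d → ℝ) ≃ₜ (Fin d → ℝ) :=
    { toFun := fun u k => (c k)⁻¹ * u k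
      invFun := fun z k => c k * z k
      left_inv := by intro u; funext k; field_simp; exact mul_div_cancel_left₀ _ (hc k)
      right_inv := by intro z; funext k; field_simp; exact mul_div_cancel_left₀ _ (hc k)
      continuous_toFun := continuous_pi fun k => continuous_const.mul (continuous_apply k)
      continuous_invFun := continuous_pi fun k => continuous_const.mul (continuous_apply k) }
  have hca : CoordAdditive ⇑F := by
    refine ⟨fun m t k => if m = k then (c k)⁻¹ * t else 0, ?_⟩
    intro z; funext k
    simp [F, Finset.sum_apply, Finset.sum_ite_eq]
  exact hGinv F hca

include hGinv in
lemma trans_mem (v : Fin d → ℝ) : (fun z => z + v) ∈ G := by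
  let F : (Fin d → ℝ) ≃ₜ (Fin d → ℝ) :=
    { toFun := fun u => u - v
      invFun := fun z => z + v
      left_inv := by intro u; simp
      right_inv := by intro z; simp
      continuous_toFun := continuous_id.sub continuous_const
      continuous_invFun := continuous_id.add continuous_const }
  have hca : CoordAdditive ⇑F := by
    refine ⟨fun m t k => if m = k then t - v k else 0, ?_⟩
    intro z; funext k
    simp [F, Finset.sum_apply, Finset.sum_ite_eq]
  exact hGinv F hca

include hGadd hGinv in
lemma const_mem (v : Fin d → ℝ) : (fun _ => v) ∈ G := by
  have h1 : (fun z : Fin d → ℝ => z + v) ∈ G := trans_mem G hGinv v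
  have h2 : (fun z k => (-1 : ℝ) * z k) ∈ G := diag_mem G hGinv _ (fun k => by norm_num)
  have h3 := hGadd _ h1 _ h2
  have : ((fun z : Fin d → ℝ => z + v) + fun z k => (-1 : ℝ) * z k) = fun _ => v := by
    funext z k
    simp [Pi.add_apply]
  rwa [this] at h3

include hGinv in
lemma single_mem (i : Fin d) (p : ℝ ≃ₜ ℝ) :
    (fun z k => if k = i then p (z i) else z k) ∈ G := by
  let F : (Fin d → ℝ) ≃ₜ (Fin d → ℝ) :=
    { toFun := fun u k => if k = i then p.symm (u i) else u k
      invFun := fun z k => if k = i then p (z i) else z k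
      left_inv := by intro u; funext k; by_cases hk : k = i <;> simp [hk]
      right_inv := by intro z; funext k; by_cases hk : k = i <;> simp [hk]
      continuous_toFun := by
        refine continuous_pi fun k => ?_
        by_cases hk : k = i <;> simp only [hk, if_pos, if_neg, if_true]
        · exact p.symm.continuous.comp (continuous_apply i)
        · simp only [hk, if_false]; exact continuous_apply k
      continuous_invFun := by
        refine continuous_pi fun k => ?_
        by_cases hk : k = i <;> simp only [hk, if_pos, if_neg, if_true]
        · exact p.continuous.comp (continuous_apply i)
        · simp only [hk, if_false]; exact continuous_apply k }
  have hca : CoordAdditive ⇑F := by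
    refine ⟨fun m t k => if k = i then (if m = i then p.symm t else 0)
      else (if m = k then t else 0), ?_⟩
    intro z; funext k
    by_cases hk : k = i <;>
      simp [F, hk, Finset.sum_apply, Finset.sum_ite_eq]
  exact hGinv F hca

include hGinv in
lemma ridge_mem (i j : Fin d) (hij : i ≠ j) (a : Fin d → ℝ) (haj : a j = 1)
    (b : ℝ) (hb : b * b = 1) (p : ℝ ≃ₜ ℝ) :
    (fun z k => if k = i then p (Sd a z)
      else if k = j then b * (z i - p (Sd a z)) else z k) ∈ G := by
  let T : (Fin d → ℝ) → (Fin d → ℝ) := fun u k =>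
    if k = i then u i + b * u j
    else if k = j then p.symm (u i) - Sd a u + (u j - a i * (b * u j))
    else u k
  let V : (Fin d → ℝ) → (Fin d → ℝ) := fun z k =>
    if k = i then p (Sd a z)
    else if k = j then b * (z i - p (Sd a z)) else z k
  have hSV : ∀ z, Sd a (V z) = Sd a z + a i * (p (Sd a z) - z i)
      + (b * (z i - p (Sd a z)) - z j) := by
    intro z
    have : V z = fun m => if m = i then p (Sd a z)
        else if m = j then b * (z i - p (Sd a z)) else z m := rfl
    rw [this, Sd_ite a hij, haj, one_mul]
  have hST : ∀ u, Sd a (T u) = p.symm (u i) := by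
    intro u
    have : T u = fun m => if m = i then u i + b * u j
        else if m = j then p.symm (u i) - Sd a u + (u j - a i * (b * u j)) else u m := rfl
    rw [this, Sd_ite a hij, haj]
    ring
  let F : (Fin d → ℝ) ≃ₜ (Fin d → ℝ) :=
    { toFun := T
      invFun := V
      left_inv := by
        intro u; funext k
        by_cases hk : k = i
        · subst hk
          simp only [V, if_pos rfl]
          rw [hST u]
          simp
        · by_cases hk2 : k = j
          · subst hk2
            simp only [V, if_neg hk, if_pos rfl]
            rw [hST u]
            simp only [T, eq_self_iff_true, if_true, if_neg hij, Homeomorph.apply_symm_apply]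
            linear_combination (u k) * hb
          · simp [V, T, hk, hk2]
      right_inv := by
        intro z; funext k
        by_cases hk : k = i
        · subst hk
          simp only [T, if_pos rfl]
          have h1 : V z k = p (Sd a z) := by simp [V]
          have h2 : V z j = b * (z k - p (Sd a z)) := by simp [V, Ne.symm hij]
          rw [h1, h2]
          linear_combination (z k - p (Sd a z)) * hb
        · by_cases hk2 : k = j
          · subst hk2
            simp only [T, if_neg hk, eq_self_iff_true, if_true]
            rw [hSV z]
            have h1 : V z i = p (Sd a z) := by simp [V]
            have h2 : V z k = b * (z i - p (Sd a z)) := by simp [V, hk]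
            rw [h1, h2, Homeomorph.symm_apply_apply]
            linear_combination (-(a i) * (z i - p (Sd a z))) * hb
          · simp [T, V, hk, hk2]
      continuous_toFun := by
        refine continuous_pi fun k => ?_
        show Continuous fun u => if k = i then u i + b * u j
          else if k = j then p.symm (u i) - Sd a u + (u j - a i * (b * u j)) else u k
        split_ifs with h1 h2
        · exact (continuous_apply i).add (continuous_const.mul (continuous_apply j))
        · exact ((p.symm.continuous.comp (continuous_apply i)).sub (Sd_cont a)).add
            ((continuous_apply j).sub
              (continuous_const.mul (continuous_const.mul (continuous_apply j))))
        · exact continuous_apply k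
      continuous_invFun := by
        refine continuous_pi fun k => ?_
        show Continuous fun z => if k = i then p (Sd a z)
          else if k = j then b * (z i - p (Sd a z)) else z k
        split_ifs with h1 h2
        · exact p.continuous.comp (Sd_cont a)
        · exact continuous_const.mul
            ((continuous_apply i).sub (p.continuous.comp (Sd_cont a)))
        · exact continuous_apply k }
  have hca : CoordAdditive ⇑F := by
    refine ⟨fun m t k =>
      if k = i then ((if m = i then t else 0) + b * (if m = j then t else 0))
      else if k = j then ((if m = i then p.symm t else 0) - a m * t
        + (if m = j then t - a i * (b * t) else 0))
      else (if m = k then t else 0), ?_⟩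
    intro z; funext k
    show T z k = _
    rw [Finset.sum_apply]
    by_cases hk : k = i
    · subst hk
      simp [T, Finset.sum_add_distrib, mul_ite, mul_zero, Finset.sum_ite_eq]
    · by_cases hk2 : k = j
      · subst hk2
        simp [T, hk, Finset.sum_add_distrib, Finset.sum_sub_distrib,
          Finset.sum_ite_eq, Sd]
      · simp [T, hk, hk2, Finset.sum_ite_eq]
  exact hGinv F hca


include hGadd hGinv in
lemma ridge_pure (i j : Fin d) (hij : i ≠ j) (a : Fin d → ℝ) (haj : a j = 1)
    (p q : ℝ ≃ₜ ℝ) :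
    (fun z k => if k = i then 2 * p (Sd a z) - 2 * q (Sd a z) else 0) ∈ G := by
  classical
  let nq : ℝ ≃ₜ ℝ := q.trans (Homeomorph.neg ℝ)
  have hnq : ∀ t, nq t = -(q t) := fun t => rfl
  have h1 := ridge_mem G hGinv i j hij a haj 1 (by norm_num) p
  have h2 := ridge_mem G hGinv i j hij a haj (-1) (by norm_num) p
  have h3 := ridge_mem G hGinv i j hij a haj 1 (by norm_num) nq
  have h4 := ridge_mem G hGinv i j hij a haj (-1) (by norm_num) nq
  have h5 := diag_mem G hGinv (fun k => if k = i then 1 else if k = j then 1 else -2)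
    (by intro k; split_ifs <;> norm_num)
  have h6 := diag_mem G hGinv (fun k => if k = i then -1 else if k = j then -1 else -2)
    (by intro k; split_ifs <;> norm_num)
  have h12 := hGadd _ h1 _ h2
  have h34 := hGadd _ h3 _ h4
  have h56 := hGadd _ h5 _ h6
  have h1234 := hGadd _ h12 _ h34
  have htot := hGadd _ h1234 _ h56
  convert htot using 1
  funext z k
  simp only [Pi.add_apply, hnq]
  by_cases hk : k = i
  · subst hk; simp only [eq_self_iff_true, if_true]; ring
  · by_cases hk2 : k = j
    · subst hk2
      simp only [if_neg hk, eq_self_iff_true, if_true]; ring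
    · simp only [if_neg hk, if_neg hk2]; ring

include hGadd hGinv in
lemma single_pure (i : Fin d) (p q : ℝ ≃ₜ ℝ) :
    (fun z k => if k = i then 2 * p (z i) - 2 * q (z i) else 0) ∈ G := by
  classical
  let nq : ℝ ≃ₜ ℝ := q.trans (Homeomorph.neg ℝ)
  have hnq : ∀ t, nq t = -(q t) := fun t => rfl
  have h1 := single_mem G hGinv i p
  have h2 := single_mem G hGinv i p
  have h3 := single_mem G hGinv i nq
  have h4 := single_mem G hGinv i nq
  have h5 := diag_mem G hGinv (fun k => if k = i then 1 else -2)
    (by intro k; split_ifs <;> norm_num)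
  have h6 := diag_mem G hGinv (fun k => if k = i then -1 else -2)
    (by intro k; split_ifs <;> norm_num)
  have h12 := hGadd _ h1 _ h2
  have h34 := hGadd _ h3 _ h4
  have h56 := hGadd _ h5 _ h6
  have h1234 := hGadd _ h12 _ h34
  have htot := hGadd _ h1234 _ h56
  convert htot using 1
  funext z k
  simp only [Pi.add_apply, hnq]
  by_cases hk : k = i
  · subst hk; simp only [eq_self_iff_true, if_true]; ring
  · simp only [if_neg hk]; ring


include hGadd hGinv in
lemma approx_scalar (K : Set (Fin d → ℝ)) (hK : IsCompact K) (i : Fin d)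
    (a' : Fin d → ℝ) (θ c : ℝ) (ε : ℝ) (hε : 0 < ε) :
    ∃ g ∈ G, ∀ z ∈ K,
      dist (g z) (fun k => if k = i then c * Real.cos (Sd a' z + θ) else 0) < ε := by
  classical
  by_cases hex : ∃ j, j ≠ i ∧ a' j ≠ 0
  · -- main ridge case
    obtain ⟨j, hji, haj'⟩ := hex
    set a : Fin d → ℝ := fun m => a' m / a' j with ha
    have haj : a j = 1 := by simp [ha, div_self haj']
    have hSa : ∀ z, a' j * Sd a z = Sd a' z := by
      intro z
      simp only [Sd, Finset.mul_sum]
      exact Finset.sum_congr rfl fun m _ => by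
        simp only [ha]; field_simp
    obtain ⟨R, hR⟩ := hK.exists_bound_of_continuousOn (Sd_cont a).continuousOn
    have hmem : ∀ z ∈ K, Sd a z ∈ Set.Icc (-(max R 0)) (max R 0) := by
      intro z hz
      have h1 : |Sd a z| ≤ R := by simpa [Real.norm_eq_abs] using hR z hz
      have h2 : |Sd a z| ≤ max R 0 := le_trans h1 (le_max_left _ _)
      exact abs_le.mp h2
    set φ : ℝ → ℝ := fun t => c * Real.cos (a' j * t + θ) with hφdef
    have hφ : Continuous φ :=
      continuous_const.mul (Real.continuous_cos.comp
        ((continuous_const.mul continuous_id).add continuous_const))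
    obtain ⟨L, f, hfL, happ⟩ := cont_approx_lipschitz φ hφ (max R 0) (le_max_right _ _) ε hε
    obtain ⟨p, q, hpq⟩ := lipschitz_decomp f L hfL
    have hg := ridge_pure G hGadd hGinv i j (Ne.symm hji) a haj p q
    refine ⟨_, hg, ?_⟩
    intro z hz
    rw [dist_pi_lt_iff hε]
    intro k
    by_cases hk : k = i
    · subst hk
      simp only [eq_self_iff_true, if_true]
      rw [Real.dist_eq, ← hpq]
      have hφS : φ (Sd a z) = c * Real.cos (Sd a' z + θ) := by
        simp only [hφdef, hSa z]
      rw [← hφS]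
      exact happ _ (hmem z hz)
    · simp only [if_neg hk, dist_self]
      exact hε
  · -- single-coordinate case
    push_neg at hex
    have hsum : ∀ z : Fin d → ℝ, Sd a' z = a' i * z i := by
      intro z
      unfold Sd
      rw [Finset.sum_eq_single i]
      · intro m _ hmi
        rw [hex m hmi, zero_mul]
      · intro hi; exact absurd (Finset.mem_univ i) hi
    obtain ⟨R, hR⟩ := hK.exists_bound_of_continuousOn (continuous_apply i).continuousOn
    have hmem : ∀ z ∈ K, z i ∈ Set.Icc (-(max R 0)) (max R 0) := by
      intro z hz
      have h1 : |z i| ≤ R := by simpa [Real.norm_eq_abs] using hR z hz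
      exact abs_le.mp (le_trans h1 (le_max_left _ _))
    set φ : ℝ → ℝ := fun t => c * Real.cos (a' i * t + θ) with hφdef
    have hφ : Continuous φ :=
      continuous_const.mul (Real.continuous_cos.comp
        ((continuous_const.mul continuous_id).add continuous_const))
    obtain ⟨L, f, hfL, happ⟩ := cont_approx_lipschitz φ hφ (max R 0) (le_max_right _ _) ε hε
    obtain ⟨p, q, hpq⟩ := lipschitz_decomp f L hfL
    have hg := single_pure G hGadd hGinv i p q
    refine ⟨_, hg, ?_⟩
    intro z hz
    rw [dist_pi_lt_iff hε]
    intro k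
    by_cases hk : k = i
    · subst hk
      simp only [eq_self_iff_true, if_true]
      rw [Real.dist_eq, ← hpq]
      have hφS : φ (z k) = c * Real.cos (Sd a' z + θ) := by
        simp only [hφdef, hsum z]
      rw [← hφS]
      exact happ _ (hmem z hz)
    · simp only [if_neg hk, dist_self]
      exact hε

end Gsection
end IAMGDC

open IAMGDC in
/-- Let `d ≥ 2` and let `G` be a set of continuous functions `ℝ^d → ℝ^d` that is closed under
addition and contains the inverse of every coordinate-wise additive homeomorphism of `ℝ^d`.
Then, for every compact `K ⊂ ℝ^d`, the restrictions of members of `G` to `K` are dense in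
`C(K, ℝ^d)` with the supremum norm. -/
theorem inverses_of_additive_maps_generate_dense_class (d : ℕ) (hd : 2 ≤ d)
    (G : Set ((Fin d → ℝ) → (Fin d → ℝ)))
    (hGcont : ∀ g ∈ G, Continuous g)
    (hGadd : ∀ g₁ ∈ G, ∀ g₂ ∈ G, g₁ + g₂ ∈ G)
    (hGinv : ∀ f : (Fin d → ℝ) ≃ₜ (Fin d → ℝ), CoordAdditive ⇑f → ⇑f.symm ∈ G) :
    ∀ K : Set (Fin d → ℝ), IsCompact K →
      ∀ h : (Fin d → ℝ) → (Fin d → ℝ), ContinuousOn h K →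
        ∀ ε > (0 : ℝ), ∃ g ∈ G, ∀ x ∈ K, dist (g x) (h x) < ε := by
  classical
  intro K hK h hcont ε hε
  haveI : CompactSpace ↥K := isCompact_iff_compactSpace.mp hK
  -- the approximable functions
  let Good : (↥K → (Fin d → ℝ)) → Prop := fun v =>
    ∀ δ > (0:ℝ), ∃ g ∈ G, ∀ x : ↥K, dist (g ↑x) (v x) < δ
  have good_add : ∀ v w : ↥K → (Fin d → ℝ), Good v → Good w → Good (v + w) := by
    intro v w hv hw δ hδ
    obtain ⟨g₁, hg₁, hgv⟩ := hv (δ/2) (by linarith)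
    obtain ⟨g₂, hg₂, hgw⟩ := hw (δ/2) (by linarith)
    refine ⟨g₁ + g₂, hGadd _ hg₁ _ hg₂, ?_⟩
    intro x
    have := dist_add_add_le (g₁ ↑x) (g₂ ↑x) (v x) (w x)
    calc dist ((g₁ + g₂) ↑x) ((v + w) x)
        ≤ dist (g₁ ↑x) (v x) + dist (g₂ ↑x) (w x) := this
      _ < δ/2 + δ/2 := add_lt_add (hgv x) (hgw x)
      _ = δ := by ring
  have good_zero : Good 0 := by
    intro δ hδ
    refine ⟨fun _ => 0, const_mem G hGadd hGinv 0, ?_⟩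
    intro x
    simpa using hδ
  have good_scalar : ∀ (i : Fin d) (c : ℝ) (a : Fin d → ℝ) (θ : ℝ),
      Good (fun x k => if k = i then c * Real.cos (Sd a ↑x + θ) else 0) := by
    intro i c a θ δ hδ
    obtain ⟨g, hgG, hg⟩ := approx_scalar G hGadd hGinv K hK i a θ c δ hδ
    exact ⟨g, hgG, fun x => hg ↑x x.2⟩
  have good_sum : ∀ {ι : Type} (s : Finset ι) (F : ι → (↥K → (Fin d → ℝ))),
      (∀ t ∈ s, Good (F t)) → Good (∑ t ∈ s, F t) := by
    intro ι s F hF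
    exact Finset.sum_induction F Good good_add good_zero hF
  have good_span : ∀ (i : Fin d) (u : C(↥K, ℝ)), u ∈ Submodule.span ℝ (gens K) →
      Good (fun x k => if k = i then u x else 0) := by
    intro i u hu
    rw [Submodule.mem_span_set] at hu
    obtain ⟨cf, hsupp, hrep⟩ := hu
    have hgood : ∀ f ∈ cf.support,
        Good (fun x k => if k = i then cf f * f x else 0) := by
      intro f hf
      obtain ⟨a, θ, hfeq⟩ := hsupp hf
      have h2 : (fun (x : ↥K) k => if k = i then cf f * f x else 0)
          = fun (x : ↥K) k => if k = i then cf f * Real.cos (Sd a ↑x + θ) else 0 := by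
        funext x k; rw [hfeq]; rfl
      rw [h2]
      exact good_scalar i (cf f) a θ
    have heq : (fun (x : ↥K) k => if k = i then u x else 0)
        = ∑ f ∈ cf.support, (fun (x : ↥K) k => if k = i then cf f * f x else 0) := by
      funext x k
      rw [Finset.sum_apply, Finset.sum_apply]
      by_cases hk : k = i
      · subst hk
        simp only [eq_self_iff_true, if_true]
        have : u x = (cf.sum fun mi r => r • mi) x := by rw [hrep]
        rw [this]
        rw [Finsupp.sum]
        rw [ContinuousMap.coe_sum, Finset.sum_apply]
        exact Finset.sum_congr rfl fun f _ => by simp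
      · simp only [if_neg hk, Finset.sum_const_zero]
    rw [heq]
    exact good_sum _ _ hgood
  have good_coord : ∀ i : Fin d, Good (fun x k => if k = i then h ↑x i else 0) := by
    intro i δ hδ
    set hi : C(↥K, ℝ) := ⟨fun x => h ↑x i, (continuous_apply i).comp hcont.restrict⟩ with hhi
    obtain ⟨⟨u, hu⟩, hnear⟩ :=
      ContinuousMap.exists_mem_subalgebra_near_continuousMap_of_separatesPoints
        (trigAlg K) (trigAlg_separates K) hi (δ/2) (by linarith)
    have hu2 : u ∈ Submodule.span ℝ (gens K) := hu
    obtain ⟨g, hgG, hg⟩ := good_span i u hu2 (δ/2) (by linarith)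
    refine ⟨g, hgG, ?_⟩
    intro x
    have h1 : dist (fun k => if k = i then u x else 0)
        (fun k => if k = i then hi x else 0) ≤ ‖u - hi‖ := by
      rw [dist_pi_le_iff (norm_nonneg _)]
      intro k
      by_cases hk : k = i
      · subst hk
        simp only [eq_self_iff_true, if_true]
        calc dist (u x) (hi x) = ‖(u - hi) x‖ := by
              rw [ContinuousMap.sub_apply, Real.dist_eq, Real.norm_eq_abs]
          _ ≤ ‖u - hi‖ := ContinuousMap.norm_coe_le_norm _ _
      · simp [hk]
    have h2 : ‖u - hi‖ < δ/2 := hnear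
    calc dist (g ↑x) (fun k => if k = i then h ↑x i else 0)
        ≤ dist (g ↑x) (fun k => if k = i then u x else 0)
          + dist (fun k => if k = i then u x else 0)
            (fun k => if k = i then hi x else 0) := by
          exact dist_triangle _ _ _
      _ < δ/2 + δ/2 := add_lt_add_of_lt_of_le (hg x) (le_trans h1 (le_of_lt h2))
      _ = δ := by ring
  have good_h : Good (fun x => h ↑x) := by
    have heq : (fun x : ↥K => h ↑x)
        = ∑ i : Fin d, (fun (x : ↥K) k => if k = i then h ↑x i else 0) := by
      funext x k
      rw [Finset.sum_apply, Finset.sum_apply]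
      simp [Finset.sum_ite_eq]
    rw [heq]
    exact good_sum _ _ (fun i _ => good_coord i)
  obtain ⟨g, hgG, hg⟩ := good_h ε hε
  exact ⟨g, hgG, fun x hx => hg ⟨x, hx⟩⟩
end

section
/- Let d ≥ 2, n ≥ 1, and let d = K·m be split into K slots of dimension m, writing z = (z_1,…,z_K) ∈ ℝ^d with z_k ∈ ℝ^m. Let F_int denote the class of homeomorphisms f : ℝ^d → ℝ^d of the form f(z) = Σ_{k=1}^K f^k(z_k) + Σ_{α : |α| ≤ n} c_α z^α, where each f^k : ℝ^m → ℝ^d, the sum ranges over multi-indices α ∈ ℕ₀^d with |α| = α_1 + … + α_d ≤ n, c_α ∈ ℝ^d, and z^α = z_1^{α_1}···z_d^{α_d}. Let G be a set of continuous functions from ℝ^d to ℝ^d that is closed under addition and contains f^{-1} for every f ∈ F_int. Then for every compact set K' ⊂ ℝ^d, the set of restrictions {g|_{K'} : g ∈ G} is dense in C(K', ℝ^d) with the supremum norm. -/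
/-- `f : ℝ^d → ℝ^d` (with `d = K·m` coordinates indexed by `Fin K × Fin m`, i.e. `K` slots of
dimension `m`) has the F_int form `f(z) = Σ_{k=1}^K f^k(z_k) + Σ_{α : |α| ≤ n} c_α z^α`,
where the second sum ranges over multi-indices `α ∈ ℕ₀^d` with `|α| ≤ n`. -/
def FIntForm (K m n : ℕ) (f : ((Fin K × Fin m) → ℝ) → ((Fin K × Fin m) → ℝ)) : Prop :=
  ∃ (F : Fin K → (Fin m → ℝ) → ((Fin K × Fin m) → ℝ))
    (S : Finset ((Fin K × Fin m) → ℕ))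
    (c : ((Fin K × Fin m) → ℕ) → ((Fin K × Fin m) → ℝ)),
    (∀ α ∈ S, ∑ i, α i ≤ n) ∧
    ∀ z, f z = (∑ k, F k (fun j => z (k, j))) + ∑ α ∈ S, (∏ i, z i ^ α i) • c α

namespace FIntAux

variable {K m n : ℕ}

lemma single_one_inj {d : Type*} [DecidableEq d] {i j : d}
    (h : Pi.single (M := fun _ => ℕ) i 1 = Pi.single j 1) : i = j := by
  by_contra hne
  have := congrFun h i
  simp [Pi.single_apply, Ne.symm hne] at this

/-- Main building block: membership in `G` of `y ↦ C y - φ((C y) p) • (C u)`. -/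
lemma lemA (hn : 1 ≤ n)
    {G : Set (((Fin K × Fin m) → ℝ) → ((Fin K × Fin m) → ℝ))}
    (hGinv : ∀ f : ((Fin K × Fin m) → ℝ) ≃ₜ ((Fin K × Fin m) → ℝ),
      FIntForm K m n ⇑f → ⇑f.symm ∈ G)
    (C : ((Fin K × Fin m) → ℝ) ≃ₗ[ℝ] ((Fin K × Fin m) → ℝ))
    (φ : ℝ → ℝ) (hφ : Continuous φ) (p : Fin K × Fin m)
    (u : (Fin K × Fin m) → ℝ) (hu : C u p = 0) :
    (fun y => C y - φ (C y p) • (C u)) ∈ G := by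
  classical
  set f : ((Fin K × Fin m) → ℝ) ≃ₜ ((Fin K × Fin m) → ℝ) :=
    { toFun := fun z => C.symm z + φ (z p) • u
      invFun := fun y => C y - φ (C y p) • (C u)
      left_inv := by
        intro z
        have h1 : C (C.symm z + φ (z p) • u) = z + φ (z p) • C u := by
          simp [map_add, map_smul]
        show C (C.symm z + φ (z p) • u) - φ ((C (C.symm z + φ (z p) • u)) p) • (C u) = z
        rw [h1]
        have h2 : (z + φ (z p) • C u) p = z p := by
          simp [hu]
        rw [h2]
        abel
      right_inv := by
        intro y
        show C.symm (C y - φ (C y p) • C u) +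
          φ ((C y - φ (C y p) • C u) p) • u = y
        have h2 : (C y - φ (C y p) • C u) p = C y p := by
          simp [hu]
        rw [h2]
        simp [map_sub, map_smul]
      continuous_toFun := by
        refine Continuous.add C.symm.toLinearMap.continuous_of_finiteDimensional ?_
        exact ((hφ.comp (continuous_apply p)).smul continuous_const)
      continuous_invFun := by
        have hC : Continuous fun y => C y := C.toLinearMap.continuous_of_finiteDimensional
        exact (hC.sub (((hφ.comp ((continuous_apply p).comp hC))).smul continuous_const)) }
  have hform : FIntForm K m n ⇑f := by
    refine ⟨fun k w => if k = p.1 then φ (w p.2) • u else 0,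
      Finset.univ.image (fun i => Pi.single i 1),
      fun α => if h : ∃ i, α = Pi.single i 1 then C.symm (Pi.single h.choose 1) else 0,
      ?_, ?_⟩
    · intro α hα
      simp only [Finset.mem_image] at hα
      obtain ⟨i, -, rfl⟩ := hα
      calc ∑ j, Pi.single i (1:ℕ) j = 1 := by simp [Pi.single_apply]
      _ ≤ n := hn
    · intro z
      have hsum1 : (∑ k, (if k = p.1 then φ (z (k, p.2)) • u else 0)) = φ (z p) • u := by
        rw [Finset.sum_ite_eq' Finset.univ p.1 (fun k => φ (z (k, p.2)) • u)]
        simp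
      have hinj : Set.InjOn (fun i : Fin K × Fin m => Pi.single (M := fun _ => ℕ) i 1)
          (Finset.univ : Finset (Fin K × Fin m)) := by
        intro i _ j _ hij
        exact single_one_inj hij
      have hsum2 : (∑ α ∈ Finset.univ.image (fun i => Pi.single i (1:ℕ)),
          (∏ i, z i ^ α i) • (if h : ∃ i, α = Pi.single i 1 then C.symm (Pi.single h.choose 1) else 0))
          = C.symm z := by
        rw [Finset.sum_image hinj]
        have : ∀ i : Fin K × Fin m, (∏ j, z j ^ (Pi.single i (1:ℕ)) j) •
            (if h : ∃ i', Pi.single (M := fun _ => ℕ) i 1 = Pi.single i' 1 then C.symm (Pi.single h.choose 1) else 0)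
            = z i • C.symm (Pi.single i 1) := by
          intro i
          have hex : ∃ i', Pi.single (M := fun _ => ℕ) i 1 = Pi.single i' 1 := ⟨i, rfl⟩
          rw [dif_pos hex]
          have : hex.choose = i := (single_one_inj hex.choose_spec).symm
          rw [this]
          congr 1
          calc ∏ j, z j ^ (Pi.single i (1:ℕ)) j
              = ∏ j, (if j = i then z j else 1) := by
                refine Finset.prod_congr rfl fun j _ => ?_
                by_cases hji : j = i <;> simp [Pi.single_apply, hji]
            _ = z i := by rw [Finset.prod_ite_eq' Finset.univ i (fun j => z j)]; simp
        rw [Finset.sum_congr rfl fun i _ => this i]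
        have : ∀ i : Fin K × Fin m, z i • C.symm (Pi.single i (1:ℝ)) = C.symm (Pi.single i (z i)) := by
          intro i
          rw [← map_smul]
          congr 1
          ext j
          by_cases hji : j = i <;> simp [Pi.single_apply, hji]
        rw [Finset.sum_congr rfl fun i _ => this i, ← map_sum]
        congr 1
        exact Finset.univ_sum_single z
      show (fun z => C.symm z + φ (z p) • u) z = _
      rw [hsum2]
      have : (∑ k, (if k = p.1 then φ ((fun j => z (k, j)) p.2) • u else 0)) = φ (z p) • u := by
        simpa using hsum1
      rw [this]
      abel
  exact hGinv f hform


section RowEquiv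

variable {d : Type*} [Fintype d] [DecidableEq d]

/-- An invertible linear map on `d → ℝ` whose `p`-th row is a prescribed vector `a`
(with `a r ≠ 0`). -/
noncomputable def rowEquiv (a : d → ℝ) (p r : d) (har : a r ≠ 0) :
    (d → ℝ) ≃ₗ[ℝ] (d → ℝ) := by
  classical
  refine LinearEquiv.ofBijective
    { toFun := fun y j => if j = p then ∑ i, a i * y i else y (Equiv.swap p r j)
      map_add' := by
        intro y y'
        ext j
        by_cases hj : j = p <;> simp [hj, mul_add, Finset.sum_add_distrib]
      map_smul' := by
        intro t y
        ext j
        by_cases hj : j = p <;> simp [hj, Finset.mul_sum] <;> ring_nf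
        · exact Finset.sum_congr rfl fun i _ => by ring }
    ?_
  have key : Function.LeftInverse
      (fun w i => if i = r then
          (w p - ∑ i' ∈ Finset.univ.erase r, a i' * w (Equiv.swap p r i')) / a r
        else w (Equiv.swap p r i))
      (fun y j => if j = p then ∑ i, a i * y i else y (Equiv.swap p r j)) := by
    intro y
    ext i
    by_cases hi : i = r
    · simp only [if_pos hi, hi]
      have h1 : ∀ i' ∈ Finset.univ.erase r, Equiv.swap p r i' ≠ p := by
        intro i' hi'
        have : i' ≠ r := (Finset.mem_erase.mp hi').1
        intro hc
        exact this (by simpa using congrArg (Equiv.swap p r) hc)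
      have h2 : (∑ i' ∈ Finset.univ.erase r,
          a i' * (if Equiv.swap p r i' = p then ∑ i, a i * y i else y (Equiv.swap p r (Equiv.swap p r i'))))
          = ∑ i' ∈ Finset.univ.erase r, a i' * y i' := by
        refine Finset.sum_congr rfl fun i' hi' => ?_
        rw [if_neg (h1 i' hi'), Equiv.swap_apply_self]
      simp only [if_true]
      rw [h2]
      have h3 : ∑ i, a i * y i = a r * y r + ∑ i' ∈ Finset.univ.erase r, a i' * y i' :=
        (Finset.add_sum_erase _ _ (Finset.mem_univ r)).symm
      rw [h3]
      field_simp
      ring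
    · simp only [if_neg hi]
      have hsw : Equiv.swap p r i ≠ p := by
        intro hc
        exact hi (by simpa using congrArg (Equiv.swap p r) hc)
      rw [if_neg hsw, Equiv.swap_apply_self]
  refine ⟨key.injective, fun w => ⟨(fun i => if i = r then
      (w p - ∑ i' ∈ Finset.univ.erase r, a i' * w (Equiv.swap p r i')) / a r
    else w (Equiv.swap p r i)), ?_⟩⟩
  ext j
  simp only [LinearMap.coe_mk, AddHom.coe_mk]
  by_cases hj : j = p
  · rw [if_pos hj, hj]
    have h3 : (∑ i, a i * (if i = r then
        (w p - ∑ i' ∈ Finset.univ.erase r, a i' * w (Equiv.swap p r i')) / a r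
      else w (Equiv.swap p r i)))
        = a r * ((w p - ∑ i' ∈ Finset.univ.erase r, a i' * w (Equiv.swap p r i')) / a r)
          + ∑ i ∈ Finset.univ.erase r, a i * w (Equiv.swap p r i) := by
      rw [← Finset.add_sum_erase _ _ (Finset.mem_univ r), if_pos rfl]
      congr 1
      refine Finset.sum_congr rfl fun i hi => ?_
      rw [if_neg (Finset.mem_erase.mp hi).1]
    rw [h3]
    field_simp
    ring
  · rw [if_neg hj]
    have hsw : Equiv.swap p r j ≠ r := by
      intro hc
      exact hj (by simpa using congrArg (Equiv.swap p r) hc)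
    rw [if_neg hsw, Equiv.swap_apply_self]

lemma rowEquiv_apply (a : d → ℝ) (p r : d) (har : a r ≠ 0) (y : d → ℝ) :
    rowEquiv a p r har y p = ∑ i, a i * y i := by
  simp [rowEquiv, LinearEquiv.ofBijective]

end RowEquiv

variable {G : Set (((Fin K × Fin m) → ℝ) → ((Fin K × Fin m) → ℝ))}

/-- Negated invertible linear maps belong to `G`. -/
lemma lemNegLin (hn : 1 ≤ n) [Nonempty (Fin K × Fin m)]
    (hGinv : ∀ f : ((Fin K × Fin m) → ℝ) ≃ₜ ((Fin K × Fin m) → ℝ),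
      FIntForm K m n ⇑f → ⇑f.symm ∈ G)
    (C : ((Fin K × Fin m) → ℝ) ≃ₗ[ℝ] ((Fin K × Fin m) → ℝ)) :
    ∃ g ∈ G, ∀ y, g y = - C y := by
  classical
  obtain ⟨p⟩ := ‹Nonempty (Fin K × Fin m)›
  have h := lemA hn hGinv (C.trans (LinearEquiv.neg ℝ)) (fun _ => 0) continuous_const p 0
    (by simp)
  refine ⟨_, h, fun y => by simp⟩

/-- Ridge functions `y ↦ φ(⟨a,y⟩) • v` (with `v p = 0`) belong to `G`. -/
lemma lemRidge (hn : 1 ≤ n) [Nonempty (Fin K × Fin m)]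
    (hGadd : ∀ g₁ ∈ G, ∀ g₂ ∈ G, g₁ + g₂ ∈ G)
    (hGinv : ∀ f : ((Fin K × Fin m) → ℝ) ≃ₜ ((Fin K × Fin m) → ℝ),
      FIntForm K m n ⇑f → ⇑f.symm ∈ G)
    (a : (Fin K × Fin m) → ℝ) (ha : a ≠ 0) (p : Fin K × Fin m)
    (v : (Fin K × Fin m) → ℝ) (hv : v p = 0)
    (φ : ℝ → ℝ) (hφ : Continuous φ) :
    ∃ g ∈ G, ∀ y, g y = φ (∑ i, a i * y i) • v := by
  classical
  obtain ⟨r, har⟩ : ∃ r, a r ≠ 0 := by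
    by_contra hc
    push_neg at hc
    exact ha (funext hc)
  set C := rowEquiv a p r har with hC
  have hCu : C (C.symm v) p = 0 := by rw [C.apply_symm_apply]; exact hv
  have h1 := lemA hn hGinv C (fun t => - φ t) (hφ.neg) p (C.symm v) hCu
  obtain ⟨g₂, hg₂, hg₂val⟩ := lemNegLin hn hGinv C
  refine ⟨_, hGadd _ h1 _ hg₂, fun y => ?_⟩
  have h2 : C (C.symm v) = v := C.apply_symm_apply v
  show (C y - (- φ (C y p)) • (C (C.symm v))) + g₂ y = φ (∑ i, a i * y i) • v
  rw [hg₂val, h2, rowEquiv_apply]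
  abel_nf
  simp

/-- Constant functions belong to `G`. -/
lemma lemConst (hd : 2 ≤ K * m) (hn : 1 ≤ n)
    (hGadd : ∀ g₁ ∈ G, ∀ g₂ ∈ G, g₁ + g₂ ∈ G)
    (hGinv : ∀ f : ((Fin K × Fin m) → ℝ) ≃ₜ ((Fin K × Fin m) → ℝ),
      FIntForm K m n ⇑f → ⇑f.symm ∈ G)
    (w : (Fin K × Fin m) → ℝ) :
    ∃ g ∈ G, ∀ y, g y = w := by
  classical
  have hcard : 1 < Fintype.card (Fin K × Fin m) := by
    rw [Fintype.card_prod, Fintype.card_fin, Fintype.card_fin]; omega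
  haveI : Nontrivial (Fin K × Fin m) := Fintype.one_lt_card_iff_nontrivial.mp hcard
  haveI : Nonempty (Fin K × Fin m) := inferInstance
  -- first: constants vanishing at some coordinate
  have key : ∀ (u : (Fin K × Fin m) → ℝ) (p : Fin K × Fin m), u p = 0 →
      ∃ g ∈ G, ∀ y, g y = u := by
    intro u p hu
    have h1 := lemA hn hGinv (LinearEquiv.refl ℝ _) (fun _ => (-1 : ℝ)) continuous_const p u
      (by simpa using hu)
    obtain ⟨g₂, hg₂, hg₂val⟩ := lemNegLin hn hGinv (LinearEquiv.refl ℝ _)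
    refine ⟨_, hGadd _ h1 _ hg₂, fun y => ?_⟩
    show (y - (-1 : ℝ) • u) + g₂ y = u
    rw [hg₂val]
    simp
  obtain ⟨p, q, hpq⟩ := exists_pair_ne (Fin K × Fin m)
  obtain ⟨g₁, hg₁, hv₁⟩ := key (Pi.single p (w p)) q (Pi.single_eq_of_ne (Ne.symm hpq) _)
  obtain ⟨g₂, hg₂, hv₂⟩ := key (w - Pi.single p (w p)) p (by simp)
  refine ⟨_, hGadd _ hg₁ _ hg₂, fun y => ?_⟩
  show g₁ y + g₂ y = w
  rw [hv₁, hv₂]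
  abel

end FIntAux

open FIntAux

/-- Let `d = K·m ≥ 2`, `n ≥ 1`, and let `G` be a set of continuous functions `ℝ^d → ℝ^d`
closed under addition and containing `f⁻¹` for every homeomorphism `f` of `ℝ^d` of F_int form.
Then, for every compact `K' ⊂ ℝ^d`, the restrictions of members of `G` to `K'` are dense in
`C(K', ℝ^d)` with the supremum norm. -/
theorem inverses_of_interaction_maps_generate_dense_class (K m n : ℕ)
    (hd : 2 ≤ K * m) (hn : 1 ≤ n)
    (G : Set (((Fin K × Fin m) → ℝ) → ((Fin K × Fin m) → ℝ)))
    (hGcont : ∀ g ∈ G, Continuous g)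
    (hGadd : ∀ g₁ ∈ G, ∀ g₂ ∈ G, g₁ + g₂ ∈ G)
    (hGinv : ∀ f : ((Fin K × Fin m) → ℝ) ≃ₜ ((Fin K × Fin m) → ℝ),
      FIntForm K m n ⇑f → ⇑f.symm ∈ G) :
    ∀ K' : Set ((Fin K × Fin m) → ℝ), IsCompact K' →
      ∀ h : ((Fin K × Fin m) → ℝ) → ((Fin K × Fin m) → ℝ), ContinuousOn h K' →
        ∀ ε > (0 : ℝ), ∃ g ∈ G, ∀ x ∈ K', dist (g x) (h x) < ε := by
  classical
  intro K' hK' h hh ε hε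
  haveI : CompactSpace ↥K' := isCompact_iff_compactSpace.mp hK'
  have hcard : 1 < Fintype.card (Fin K × Fin m) := by
    rw [Fintype.card_prod, Fintype.card_fin, Fintype.card_fin]; omega
  haveI : Nontrivial (Fin K × Fin m) := Fintype.one_lt_card_iff_nontrivial.mp hcard
  haveI : Nonempty (Fin K × Fin m) := inferInstance
  -- the trig ridge functions, restricted to K'
  have contin : ∀ a : (Fin K × Fin m) → ℝ,
      Continuous fun x : ↥K' => ∑ i, a i * (x : (Fin K × Fin m) → ℝ) i := by
    intro a
    exact continuous_finset_sum _ fun i _ =>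
      continuous_const.mul ((continuous_apply i).comp continuous_subtype_val)
  let cosF : ((Fin K × Fin m) → ℝ) → C(↥K', ℝ) := fun a =>
    ⟨fun x => Real.cos (∑ i, a i * (x : (Fin K × Fin m) → ℝ) i),
      Real.continuous_cos.comp (contin a)⟩
  let sinF : ((Fin K × Fin m) → ℝ) → C(↥K', ℝ) := fun a =>
    ⟨fun x => Real.sin (∑ i, a i * (x : (Fin K × Fin m) → ℝ) i),
      Real.continuous_sin.comp (contin a)⟩
  set gen : Set C(↥K', ℝ) := Set.range cosF ∪ Set.range sinF with hgen
  set V : Submodule ℝ C(↥K', ℝ) := Submodule.span ℝ gen with hV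
  -- sums over differences/sums of frequency vectors
  have hsub : ∀ (a b : (Fin K × Fin m) → ℝ) (x : ↥K'),
      (∑ i, (a - b) i * (x : (Fin K × Fin m) → ℝ) i)
        = (∑ i, a i * ((x : (Fin K × Fin m) → ℝ)) i) - (∑ i, b i * ((x : (Fin K × Fin m) → ℝ)) i) := by
    intro a b x
    rw [← Finset.sum_sub_distrib]
    exact Finset.sum_congr rfl fun i _ => by simp [sub_mul]
  have hadd : ∀ (a b : (Fin K × Fin m) → ℝ) (x : ↥K'),
      (∑ i, (a + b) i * (x : (Fin K × Fin m) → ℝ) i)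
        = (∑ i, a i * ((x : (Fin K × Fin m) → ℝ)) i) + (∑ i, b i * ((x : (Fin K × Fin m) → ℝ)) i) := by
    intro a b x
    rw [← Finset.sum_add_distrib]
    exact Finset.sum_congr rfl fun i _ => by simp [add_mul]
  -- products of generators are in V
  have genmul : ∀ f ∈ gen, ∀ f' ∈ gen, f * f' ∈ V := by
    rintro f hf f' hf'
    have memV : ∀ a, cosF a ∈ V ∧ sinF a ∈ V := fun a =>
      ⟨Submodule.subset_span (Or.inl ⟨a, rfl⟩), Submodule.subset_span (Or.inr ⟨a, rfl⟩)⟩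
    rcases hf with ⟨a, rfl⟩ | ⟨a, rfl⟩ <;> rcases hf' with ⟨b, rfl⟩ | ⟨b, rfl⟩
    · have : cosF a * cosF b
          = ((1:ℝ)/2) • cosF (a - b) + ((1:ℝ)/2) • cosF (a + b) := by
        ext x
        simp only [ContinuousMap.mul_apply, ContinuousMap.add_apply,
          ContinuousMap.smul_apply, ContinuousMap.coe_mk, smul_eq_mul, cosF]
        rw [hsub a b x, hadd a b x, Real.cos_sub, Real.cos_add]
        ring
      rw [this]
      exact add_mem (Submodule.smul_mem _ _ (memV _).1) (Submodule.smul_mem _ _ (memV _).1)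
    · have : cosF a * sinF b
          = ((1:ℝ)/2) • sinF (a + b) - ((1:ℝ)/2) • sinF (a - b) := by
        ext x
        simp only [ContinuousMap.mul_apply, ContinuousMap.sub_apply,
          ContinuousMap.smul_apply, ContinuousMap.coe_mk, smul_eq_mul, cosF, sinF]
        rw [hsub a b x, hadd a b x, Real.sin_sub, Real.sin_add]
        ring
      rw [this]
      exact sub_mem (Submodule.smul_mem _ _ (memV _).2) (Submodule.smul_mem _ _ (memV _).2)
    · have : sinF a * cosF b
          = ((1:ℝ)/2) • sinF (a + b) + ((1:ℝ)/2) • sinF (a - b) := by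
        ext x
        simp only [ContinuousMap.mul_apply, ContinuousMap.add_apply,
          ContinuousMap.smul_apply, ContinuousMap.coe_mk, smul_eq_mul, cosF, sinF]
        rw [hsub a b x, hadd a b x, Real.sin_sub, Real.sin_add]
        ring
      rw [this]
      exact add_mem (Submodule.smul_mem _ _ (memV _).2) (Submodule.smul_mem _ _ (memV _).2)
    · have : sinF a * sinF b
          = ((1:ℝ)/2) • cosF (a - b) - ((1:ℝ)/2) • cosF (a + b) := by
        ext x
        simp only [ContinuousMap.mul_apply, ContinuousMap.sub_apply,
          ContinuousMap.smul_apply, ContinuousMap.coe_mk, smul_eq_mul, cosF, sinF]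
        rw [hsub a b x, hadd a b x, Real.cos_sub, Real.cos_add]
        ring
      rw [this]
      exact sub_mem (Submodule.smul_mem _ _ (memV _).1) (Submodule.smul_mem _ _ (memV _).1)
  -- V is closed under multiplication
  have hmul : ∀ x y : C(↥K', ℝ), x ∈ V → y ∈ V → x * y ∈ V := by
    intro x y hx hy
    refine Submodule.span_induction
      (p := fun x _ => ∀ y ∈ V, x * y ∈ V) ?_ ?_ ?_ ?_ hx y hy
    · intro f hf y' hy'
      refine Submodule.span_induction (p := fun y _ => f * y ∈ V) ?_ ?_ ?_ ?_ hy'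
      · intro f' hf'; exact genmul f hf f' hf'
      · simpa using Submodule.zero_mem V
      · intro u v _ _ hu hv
        rw [mul_add]; exact add_mem hu hv
      · intro t u _ hu
        rw [mul_smul_comm]; exact Submodule.smul_mem _ _ hu
    · intro y' _; simpa using Submodule.zero_mem V
    · intro u v _ _ hu hv y' hy'
      rw [add_mul]; exact add_mem (hu y' hy') (hv y' hy')
    · intro t u _ hu y' hy'
      rw [smul_mul_assoc]; exact Submodule.smul_mem _ _ (hu y' hy')
  have hone : (1 : C(↥K', ℝ)) ∈ V := by
    have : (1 : C(↥K', ℝ)) = cosF 0 := by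
      ext x
      simp [cosF]
    rw [this]
    exact Submodule.subset_span (Or.inl ⟨0, rfl⟩)
  let A : Subalgebra ℝ C(↥K', ℝ) := V.toSubalgebra hone hmul
  -- A separates points
  have sep : A.SeparatesPoints := by
    intro x y hxy
    have hxy' : (x : (Fin K × Fin m) → ℝ) ≠ (y : (Fin K × Fin m) → ℝ) := fun hc => hxy (Subtype.ext hc)
    set w : (Fin K × Fin m) → ℝ := (x : (Fin K × Fin m) → ℝ) - (y : (Fin K × Fin m) → ℝ) with hw
    have hwne : ∃ i, w i ≠ 0 := by
      by_contra hc
      push_neg at hc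
      exact hxy' (sub_eq_zero.mp (funext hc))
    set X : ℝ := ∑ i, w i * ((x : (Fin K × Fin m) → ℝ)) i with hX
    set Y : ℝ := ∑ i, w i * ((y : (Fin K × Fin m) → ℝ)) i with hY
    have hXY : X - Y = ∑ i, w i ^ 2 := by
      rw [hX, hY, ← Finset.sum_sub_distrib]
      refine Finset.sum_congr rfl fun i _ => ?_
      rw [hw]
      simp [sub_mul, mul_sub]
      ring
    have hpos : 0 < ∑ i, w i ^ 2 := by
      obtain ⟨i, hi⟩ := hwne
      exact Finset.sum_pos' (fun j _ => sq_nonneg _)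
        ⟨i, Finset.mem_univ i, by positivity⟩
    set M : ℝ := max |X| |Y| with hM
    have hM0 : 0 ≤ M := le_trans (abs_nonneg X) (le_max_left _ _)
    set s : ℝ := (Real.pi / 2) / (M + 1) with hs
    have hspos : 0 < s := by
      have := Real.pi_pos
      positivity
    have hbound : ∀ T : ℝ, |T| ≤ M → s * T ∈ Set.Icc (-(Real.pi/2)) (Real.pi/2) := by
      intro T hT
      have h1 : |s * T| ≤ s * M := by
        rw [abs_mul, abs_of_pos hspos]
        exact mul_le_mul_of_nonneg_left hT hspos.le
      have h2 : s * M < Real.pi / 2 := by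
        rw [hs]
        rw [div_mul_eq_mul_div, div_lt_iff₀ (by positivity)]
        have : M < M + 1 := by linarith
        nlinarith [Real.pi_pos]
      have := abs_le.mp (le_of_lt (lt_of_le_of_lt h1 h2))
      exact ⟨this.1, this.2⟩
    refine ⟨(sinF (s • w) : C(↥K', ℝ)), ⟨sinF (s • w),
      Submodule.subset_span (Or.inr ⟨s • w, rfl⟩), rfl⟩, ?_⟩
    have hev : ∀ z : ↥K', (sinF (s • w)) z = Real.sin (s * ∑ i, w i * ((z : (Fin K × Fin m) → ℝ)) i) := by
      intro z
      simp only [sinF, ContinuousMap.coe_mk]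
      rw [Finset.mul_sum]
      congr 1
      exact Finset.sum_congr rfl fun i _ => by simp [mul_assoc]
    show (sinF (s • w)) x ≠ (sinF (s • w)) y
    rw [hev x, hev y, ← hX, ← hY]
    have hmono := Real.strictMonoOn_sin.injOn
    intro hc
    have heq : s * X = s * Y := hmono (hbound X (le_max_left _ _)) (hbound Y (le_max_right _ _)) hc
    have : X = Y := mul_left_cancel₀ hspos.ne' heq
    rw [← sub_eq_zero] at this
    rw [hXY] at this
    exact hpos.ne' this
  -- realizability of elements of V
  have realize : ∀ ψ : C(↥K', ℝ), ψ ∈ V → ∀ (c : ℝ) (q : Fin K × Fin m),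
      ∃ g ∈ G, ∀ x (hx : x ∈ K'), g x = Pi.single q (c * ψ ⟨x, hx⟩) := by
    intro ψ hψ
    refine Submodule.span_induction (p := fun ψ _ => ∀ (c : ℝ) (q : Fin K × Fin m),
      ∃ g ∈ G, ∀ x (hx : x ∈ K'), g x = Pi.single q (c * ψ ⟨x, hx⟩)) ?_ ?_ ?_ ?_ hψ
    · rintro f (⟨a, rfl⟩ | ⟨a, rfl⟩) c q
      · by_cases ha : a = 0
        · obtain ⟨g, hg, hgval⟩ := lemConst (G := G) hd hn hGadd hGinv (Pi.single q c)
          refine ⟨g, hg, fun x hx => ?_⟩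
          rw [hgval]
          simp [cosF, ha]
        · obtain ⟨p, hp⟩ := exists_ne q
          obtain ⟨g, hg, hgval⟩ := lemRidge (G := G) hn hGadd hGinv a ha p
            (Pi.single q 1) (Pi.single_eq_of_ne hp 1)
            (fun t => c * Real.cos t) (continuous_const.mul Real.continuous_cos)
          refine ⟨g, hg, fun x hx => ?_⟩
          rw [hgval]
          ext j
          simp [cosF, Pi.single_apply]
      · by_cases ha : a = 0
        · obtain ⟨g, hg, hgval⟩ := lemConst (G := G) hd hn hGadd hGinv 0
          refine ⟨g, hg, fun x hx => ?_⟩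
          rw [hgval]
          simp [sinF, ha]
        · obtain ⟨p, hp⟩ := exists_ne q
          obtain ⟨g, hg, hgval⟩ := lemRidge (G := G) hn hGadd hGinv a ha p
            (Pi.single q 1) (Pi.single_eq_of_ne hp 1)
            (fun t => c * Real.sin t) (continuous_const.mul Real.continuous_sin)
          refine ⟨g, hg, fun x hx => ?_⟩
          rw [hgval]
          ext j
          simp [sinF, Pi.single_apply]
    · intro c q
      obtain ⟨g, hg, hgval⟩ := lemConst (G := G) hd hn hGadd hGinv 0
      exact ⟨g, hg, fun x hx => by rw [hgval]; simp⟩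
    · intro u v _ _ hu hv c q
      obtain ⟨g₁, hg₁, hv₁⟩ := hu c q
      obtain ⟨g₂, hg₂, hv₂⟩ := hv c q
      refine ⟨_, hGadd _ hg₁ _ hg₂, fun x hx => ?_⟩
      show g₁ x + g₂ x = _
      rw [hv₁ x hx, hv₂ x hx]
      ext j
      simp [Pi.single_apply, mul_add]
      split <;> ring
    · intro t u _ hu c q
      obtain ⟨g, hg, hgval⟩ := hu (c * t) q
      refine ⟨g, hg, fun x hx => ?_⟩
      rw [hgval x hx]
      congr 1
      simp [smul_eq_mul]
      ring
  -- choose approximants per coordinate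
  have happrox : ∀ q : Fin K × Fin m, ∃ ψ : C(↥K', ℝ), ψ ∈ V ∧
      ∀ x : ↥K', |ψ x - h (x : (Fin K × Fin m) → ℝ) q| < ε / 2 := by
    intro q
    have hcont : Continuous fun x : ↥K' => h (x : (Fin K × Fin m) → ℝ) q :=
      (continuous_apply q).comp hh.restrict
    obtain ⟨⟨ψ, hψ⟩, hnear⟩ :=
      ContinuousMap.exists_mem_subalgebra_near_continuous_of_separatesPoints A sep
        (fun x : ↥K' => h (x : (Fin K × Fin m) → ℝ) q) hcont (ε / 2) (by positivity)
    exact ⟨ψ, hψ, fun x => by simpa [Real.norm_eq_abs] using hnear x⟩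
  choose ψs hψV hψnear using happrox
  -- realize each coordinate and sum
  have hreal : ∀ q : Fin K × Fin m, ∃ g ∈ G, ∀ x (hx : x ∈ K'),
      g x = Pi.single q (ψs q ⟨x, hx⟩) := by
    intro q
    obtain ⟨g, hg, hgval⟩ := realize (ψs q) (hψV q) 1 q
    exact ⟨g, hg, fun x hx => by rw [hgval x hx]; simp⟩
  -- sum over coordinates
  have hsum : ∀ (s : Finset (Fin K × Fin m)), ∃ g ∈ G, ∀ x (hx : x ∈ K'),
      g x = ∑ q ∈ s, Pi.single q (ψs q ⟨x, hx⟩) := by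
    intro s
    induction s using Finset.induction_on with
    | empty =>
      obtain ⟨g, hg, hgval⟩ := lemConst (G := G) hd hn hGadd hGinv 0
      exact ⟨g, hg, fun x hx => by rw [hgval]; simp⟩
    | insert q s' hq ih =>
      obtain ⟨g₁, hg₁, hv₁⟩ := hreal q
      obtain ⟨g₂, hg₂, hv₂⟩ := ih
      refine ⟨_, hGadd _ hg₁ _ hg₂, fun x hx => ?_⟩
      show g₁ x + g₂ x = _
      rw [hv₁ x hx, hv₂ x hx, Finset.sum_insert hq]
  obtain ⟨g, hg, hgval⟩ := hsum Finset.univ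
  refine ⟨g, hg, fun x hx => ?_⟩
  have hx' : g x = fun i => ψs i ⟨x, hx⟩ := by
    rw [hgval x hx]
    exact Finset.univ_sum_single _
  rw [hx']
  rw [dist_pi_lt_iff hε]
  intro i
  rw [Real.dist_eq]
  calc |ψs i ⟨x, hx⟩ - h x i| < ε / 2 := hψnear i ⟨x, hx⟩
    _ < ε := by linarith
end

section
/- Let d ≥ 1 and k ≥ 1. The real linear span of the set of functions { x ↦ (Σ_{i=1}^d α_i x_i)^k : α ∈ ℝ^d } from ℝ^d to ℝ equals the space of all homogeneous polynomial functions of degree k on ℝ^d, i.e. the span of the monomial functions x ↦ x_1^{β_1}···x_d^{β_d} over all β ∈ ℕ₀^d with β_1 + … + β_d = k. -/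
/-!
Expanding `(∑ aᵢ xᵢ)ᵏ` by the multinomial theorem shows that powers of linear forms are
homogeneous of degree `k`. Conversely, `x^β` is a product of `k` coordinate functions `yₘ`,
and the polarization identity
`k! ∏ yₘ = ∑_{S ⊆ [k]} (-1)^{k - |S|} (∑_{m ∈ S} yₘ)ᵏ`
writes it as a combination of `k`-th powers of linear forms. In that identity, once
`(∑_{m ∈ S} yₘ)ᵏ` is expanded into words `p : [k] → [k]` with range in `S`,
inclusion–exclusion over `S ⊇ range p` kills every word that is not a permutation.
-/

open Finset
open scoped Nat

variable {ι : Type*} [Fintype ι] [DecidableEq ι]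

theorem sum_superset_neg_one_pow_card_compl {R : Type*} [Ring R] (T : Finset ι) :
    ∑ S with T ⊆ S, (-1 : R) ^ #Sᶜ = if T = univ then 1 else 0 := by
  have hcompl : ∑ S with T ⊆ S, (-1 : R) ^ #Sᶜ = ∑ S ∈ Tᶜ.powerset, (-1 : R) ^ #S :=
    sum_nbij' compl compl (by simp) (by simpa using fun _ => subset_compl_comm.1) (by simp)
      (by simp) (by simp)
  have halt := congrArg (Int.cast : ℤ → R) (sum_powerset_neg_one_pow_card (x := Tᶜ))
  push_cast at halt
  rw [hcompl, halt]
  simp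

theorem sum_pow_card_eq_sum_ite_image_subset {R : Type*} [CommSemiring R] (S : Finset ι)
    (y : ι → R) :
    (∑ m ∈ S, y m) ^ Fintype.card ι
      = ∑ p : ι → ι, if univ.image p ⊆ S then ∏ j, y (p j) else 0 := by
  rw [← card_univ, ← prod_const, prod_univ_sum, ← sum_filter]
  congr 1
  ext p
  simp [image_subset_iff]

theorem sum_bijective_eq_sum_perm {M : Type*} [AddCommMonoid M] (g : (ι → ι) → M) :
    ∑ p : ι → ι, (if Function.Bijective p then g p else 0) = ∑ σ : Equiv.Perm ι, g σ := by
  rw [← sum_filter, sum_subtype _ (p := Function.Bijective) (fun _ => by simp)]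
  exact Fintype.sum_equiv Equiv.bijectiveEquiv _ _ (fun _ => rfl)

theorem sum_neg_one_pow_card_compl_mul_sum_pow {R : Type*} [CommRing R] (y : ι → R) :
    ∑ S : Finset ι, (-1 : R) ^ #Sᶜ * (∑ m ∈ S, y m) ^ Fintype.card ι
      = (Fintype.card ι)! * ∏ m, y m := by
  calc ∑ S : Finset ι, (-1 : R) ^ #Sᶜ * (∑ m ∈ S, y m) ^ Fintype.card ι
      = ∑ p : ι → ι, (∑ S with univ.image p ⊆ S, (-1 : R) ^ #Sᶜ) * ∏ j, y (p j) := by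
        simp_rw [sum_pow_card_eq_sum_ite_image_subset, mul_sum, sum_filter, sum_mul]
        rw [sum_comm]
        simp [mul_ite]
    _ = ∑ p : ι → ι, if Function.Bijective p then ∏ j, y (p j) else 0 := by
        refine sum_congr rfl fun p _ => ?_
        have himage : univ.image p = univ ↔ Function.Bijective p := by
          rw [← Finite.surjective_iff_bijective, eq_univ_iff_forall]
          simp [Function.Surjective]
        rw [sum_superset_neg_one_pow_card_compl, if_congr himage rfl rfl, ite_mul, one_mul,
          zero_mul]
    _ = ∑ σ : Equiv.Perm ι, ∏ m, y m := by
        rw [sum_bijective_eq_sum_perm]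
        exact sum_congr rfl fun σ _ => Equiv.prod_comp σ y
    _ = (Fintype.card ι)! * ∏ m, y m := by
        simp [Fintype.card_perm]

theorem prod_mem_span_pow_sum {K A : Type*} [Field K] [CharZero K] [CommRing A] [Algebra K A]
    (f : ι → A) :
    ∏ m, f m ∈
      Submodule.span K (Set.range fun S : Finset ι => (∑ m ∈ S, f m) ^ Fintype.card ι) := by
  have hfact : ((Fintype.card ι)! : K) ≠ 0 := mod_cast (Fintype.card ι).factorial_ne_zero
  rw [← Submodule.smul_mem_iff _ hfact, Nat.cast_smul_eq_nsmul, nsmul_eq_mul,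
    ← sum_neg_one_pow_card_compl_mul_sum_pow]
  refine Submodule.sum_mem _ fun S _ => ?_
  have hS : (∑ m ∈ S, f m) ^ Fintype.card ι ∈
      Submodule.span K (Set.range fun S : Finset ι => (∑ m ∈ S, f m) ^ Fintype.card ι) :=
    Submodule.subset_span (Set.mem_range_self S)
  rcases neg_one_pow_eq_or A #Sᶜ with h | h <;> simpa [h] using hS

section LinearForms

variable (K σ : Type*) [Fintype σ]

def linearFormPowers [CommSemiring K] (k : ℕ) : Set ((σ → K) → K) :=
  {p | ∃ a : σ → K, p = fun x => (∑ i, a i * x i) ^ k}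

def monomialsOfDegree [CommSemiring K] (k : ℕ) : Set ((σ → K) → K) :=
  {p | ∃ β : σ → ℕ, ∑ i, β i = k ∧ p = fun x => ∏ i, x i ^ β i}

theorem linearFormPowers_subset_span_monomialsOfDegree [CommSemiring K] (k : ℕ) :
    linearFormPowers K σ k ⊆ Submodule.span K (monomialsOfDegree K σ k) := by
  classical
  rintro _ ⟨a, rfl⟩
  have hexpand : (fun x : σ → K => (∑ i, a i * x i) ^ k) = ∑ β ∈ piAntidiag univ k,
      ((Nat.multinomial univ β : K) * ∏ i, a i ^ β i) • fun x : σ → K => ∏ i, x i ^ β i := by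
    funext x
    simp only [Finset.sum_apply, Pi.smul_apply, smul_eq_mul, sum_pow_eq_sum_piAntidiag, mul_pow,
      prod_mul_distrib, mul_assoc]
  rw [SetLike.mem_coe, hexpand]
  exact Submodule.sum_mem _ fun β hβ => Submodule.smul_mem _ _
    (Submodule.subset_span ⟨β, (mem_piAntidiag.1 hβ).1, rfl⟩)

theorem prod_linearForms_mem_span_linearFormPowers [Field K] [CharZero K] (a : ι → σ → K) :
    (fun x => ∏ m, ∑ i, a m i * x i) ∈
      Submodule.span K (linearFormPowers K σ (Fintype.card ι)) := by
  have h := prod_mem_span_pow_sum (K := K) fun m (x : σ → K) => ∑ i, a m i * x i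
  rw [← Finset.prod_fn]
  refine Submodule.span_mono ?_ h
  rintro _ ⟨S, rfl⟩
  refine ⟨fun i => ∑ m ∈ S, a m i, ?_⟩
  funext x
  simp [Finset.sum_apply, sum_mul, sum_comm (s := S)]

theorem monomialsOfDegree_subset_span_linearFormPowers [Field K] [CharZero K] (k : ℕ) :
    monomialsOfDegree K σ k ⊆ Submodule.span K (linearFormPowers K σ k) := by
  classical
  rintro _ ⟨β, rfl, rfl⟩
  -- `x^β` is the product of the coordinates `x i`, one for each index in `Σ i, Fin (β i)`.
  simpa [Fintype.prod_sigma, Pi.single_apply] using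
    prod_linearForms_mem_span_linearFormPowers K σ (ι := Σ i, Fin (β i))
      fun s => Pi.single s.1 1

end LinearForms

theorem span_powers_of_linear_forms_eq_homogeneous_polynomials_general (d k : ℕ) :
    Submodule.span ℝ
        {p : (Fin d → ℝ) → ℝ | ∃ a : Fin d → ℝ, p = fun x => (∑ i, a i * x i) ^ k}
      = Submodule.span ℝ
        {p : (Fin d → ℝ) → ℝ |
          ∃ β : Fin d → ℕ, (∑ i, β i) = k ∧ p = fun x => ∏ i, x i ^ β i} :=
  le_antisymm
    (Submodule.span_le.2 (linearFormPowers_subset_span_monomialsOfDegree ℝ (Fin d) k))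
    (Submodule.span_le.2 (monomialsOfDegree_subset_span_linearFormPowers ℝ (Fin d) k))

/-- For `d ≥ 1` and `k ≥ 1`, the real linear span of the functions `x ↦ (Σ_i α_i x_i)^k`
(over all `α ∈ ℝ^d`) equals the span of the degree-`k` monomial functions
`x ↦ x_1^{β_1}···x_d^{β_d}` (over all `β ∈ ℕ₀^d` with `|β| = k`), i.e. the space of all
homogeneous polynomial functions of degree `k` on `ℝ^d`. -/
theorem span_powers_of_linear_forms_eq_homogeneous_polynomials (d k : ℕ)
    (hd : 1 ≤ d) (hk : 1 ≤ k) :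
    Submodule.span ℝ
        {p : (Fin d → ℝ) → ℝ | ∃ a : Fin d → ℝ, p = fun x => (∑ i, a i * x i) ^ k}
      = Submodule.span ℝ
        {p : (Fin d → ℝ) → ℝ |
          ∃ β : Fin d → ℕ, (∑ i, β i) = k ∧ p = fun x => ∏ i, x i ^ β i} :=
  span_powers_of_linear_forms_eq_homogeneous_polynomials_general d k
end

section
/- Let d ≥ 2, k ≥ 1, l ∈ {1,…,d}, and α ∈ ℝ^d. Then there exist two coordinate-wise additive homeomorphisms f_1, f_2 : ℝ^d → ℝ^d such that f_1^{-1}(x) + f_2^{-1}(x) = (Σ_{i=1}^d α_i x_i)^k · e_l for all x ∈ ℝ^d, where e_l denotes the l-th standard basis vector of ℝ^d. In particular, the map x ↦ (Σ_{i=1}^d α_i x_i)^k · e_l is a sum of two inverses of coordinate-wise additive homeomorphisms. -/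
open Finset

namespace CoordAdditive

variable {d₁ d₂ d₃ : ℕ}

theorem of_linearMap (L : (Fin d₁ → ℝ) →ₗ[ℝ] (Fin d₂ → ℝ)) : CoordAdditive L :=
  ⟨fun i t => L (Pi.single i t), fun z => by rw [← map_sum, univ_sum_single]⟩

theorem comp_apply (j : Fin d₁) (g : ℝ → Fin d₂ → ℝ) : CoordAdditive fun z => g (z j) :=
  ⟨fun i t => if i = j then g t else 0, fun z => by simp⟩

theorem sub {f g : (Fin d₁ → ℝ) → (Fin d₂ → ℝ)} (hf : CoordAdditive f) (hg : CoordAdditive g) :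
    CoordAdditive (f - g) := by
  obtain ⟨F, hF⟩ := hf
  obtain ⟨G, hG⟩ := hg
  exact ⟨F - G, fun z => by simp [hF, hG, sum_sub_distrib]⟩

theorem linearMap_comp {f : (Fin d₁ → ℝ) → (Fin d₂ → ℝ)} (hf : CoordAdditive f)
    (L : (Fin d₂ → ℝ) →ₗ[ℝ] (Fin d₃ → ℝ)) : CoordAdditive (L ∘ f) := by
  obtain ⟨F, hF⟩ := hf
  exact ⟨fun i t => L (F i t), fun z => by simp [hF]⟩

end CoordAdditive

section NegShear

variable {ι R : Type*} [Ring R] [TopologicalSpace R] [IsTopologicalRing R]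
  {v : ι → R} {j : ι}

def negShear (hv : v j = 0) (p : R → R) (hp : Continuous p) : (ι → R) ≃ₜ (ι → R) where
  toFun y := p (y j) • v - y
  invFun z := p (-z j) • v - z
  left_inv y := by simp [hv]
  right_inv z := by simp [hv]
  continuous_toFun := ((hp.comp (continuous_apply j)).smul continuous_const).sub continuous_id
  continuous_invFun :=
    ((hp.comp (continuous_apply j).neg).smul continuous_const).sub continuous_id

theorem negShear_apply (hv : v j = 0) (p : R → R) (hp : Continuous p) (y : ι → R) :
    negShear hv p hp y = p (y j) • v - y := rfl

end NegShear

theorem coordAdditive_negShear_symm {d : ℕ} {v : Fin d → ℝ} {j : Fin d} (hv : v j = 0)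
    (p : ℝ → ℝ) (hp : Continuous p) : CoordAdditive (negShear hv p hp).symm :=
  (CoordAdditive.comp_apply j fun t => p (-t) • v).sub (.of_linearMap LinearMap.id)

section LinearForm

variable {ι K : Type*} [Fintype ι] [DecidableEq ι] [Field K]

def updateLinearForm (a : ι → K) (m : ι) : (ι → K) →ₗ[K] (ι → K) where
  toFun x := Function.update x m (∑ i, a i * x i)
  map_add' x y := by
    ext i; rcases eq_or_ne i m with rfl | h <;> simp [*, mul_add, sum_add_distrib]
  map_smul' c x := by
    ext i; rcases eq_or_ne i m with rfl | h <;> simp [*, mul_sum, mul_left_comm]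

theorem updateLinearForm_apply_self (a : ι → K) (m : ι) (x : ι → K) :
    updateLinearForm a m x m = ∑ i, a i * x i := by
  simp [updateLinearForm]

theorem updateLinearForm_injective {a : ι → K} {m : ι} (ham : a m ≠ 0) :
    Function.Injective (updateLinearForm a m) := by
  refine (injective_iff_map_eq_zero _).mpr fun x hx => ?_
  have hoff : ∀ i ≠ m, x i = 0 := fun i hi => by
    simpa [updateLinearForm, hi] using congr_fun hx i
  have hm : a m * x m = 0 :=
    calc a m * x m = ∑ i, a i * x i :=
          (sum_eq_single_of_mem (f := fun i => a i * x i) m (mem_univ m)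
            fun i _ hi => by simp [hoff i hi]).symm
      _ = 0 := by rw [← updateLinearForm_apply_self, hx, Pi.zero_apply]
  ext i
  rcases eq_or_ne i m with rfl | hi
  · exact (mul_eq_zero.mp hm).resolve_left ham
  · exact hoff i hi

theorem exists_linearEquiv_linearForm_eq_mul_apply [Nontrivial ι] (a : ι → K) (l : ι) :
    ∃ j ≠ l, ∃ (γ : K) (B : (ι → K) ≃ₗ[K] (ι → K)), ∀ x, ∑ i, a i * x i = γ * B x j := by
  by_cases h : ∃ m ≠ l, a m ≠ 0
  · obtain ⟨m, hml, ham⟩ := h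
    refine ⟨m, hml, 1, .ofInjectiveEndo _ (updateLinearForm_injective ham), fun x => ?_⟩
    simp [updateLinearForm_apply_self]
  · push Not at h
    obtain ⟨j, hjl⟩ := exists_ne l
    refine ⟨j, hjl, a l, .funCongrLeft K K (Equiv.swap j l), fun x => ?_⟩
    rw [sum_eq_single l (fun i _ hi => by simp [h i hi]) (by simp)]
    simp [LinearEquiv.funCongrLeft_apply]

end LinearForm

theorem exists_coordAdditive_of_linearForm_eq_mul_apply {d : ℕ} (k : ℕ) {j l : Fin d}
    (hjl : j ≠ l) (a : Fin d → ℝ) (γ : ℝ) (B : (Fin d → ℝ) ≃L[ℝ] (Fin d → ℝ))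
    (hB : ∀ x, ∑ i, a i * x i = γ * B x j) :
    ∃ f₁ f₂ : (Fin d → ℝ) ≃ₜ (Fin d → ℝ),
      CoordAdditive ⇑f₁ ∧ CoordAdditive ⇑f₂ ∧
      ∀ x : Fin d → ℝ,
        f₁.symm x + f₂.symm x = (∑ i, a i * x i) ^ k • (Pi.single l 1 : Fin d → ℝ) := by
  have hv : (Pi.single l 1 : Fin d → ℝ) j = 0 := Pi.single_eq_of_ne hjl 1
  let S := negShear hv (fun t => (γ * t) ^ k) (by fun_prop)
  refine ⟨B.symm.toHomeomorph, (B.toHomeomorph.trans S).symm,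
    .of_linearMap B.symm.toLinearEquiv.toLinearMap,
    (coordAdditive_negShear_symm hv _ _).linearMap_comp B.symm.toLinearEquiv.toLinearMap,
    fun x => ?_⟩
  simp [S, negShear_apply, hB]

theorem power_of_linear_form_is_sum_of_two_additive_inverses_general (d k : ℕ)
    (hd : 2 ≤ d) (l : Fin d) (a : Fin d → ℝ) :
    ∃ f₁ f₂ : (Fin d → ℝ) ≃ₜ (Fin d → ℝ),
      CoordAdditive ⇑f₁ ∧ CoordAdditive ⇑f₂ ∧
      ∀ x : Fin d → ℝ,
        f₁.symm x + f₂.symm x = (∑ i, a i * x i) ^ k • (Pi.single l 1 : Fin d → ℝ) := by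
  have : Nontrivial (Fin d) := Fin.nontrivial_iff_two_le.mpr hd
  obtain ⟨j, hjl, γ, B, hB⟩ := exists_linearEquiv_linearForm_eq_mul_apply a l
  exact exists_coordAdditive_of_linearForm_eq_mul_apply k hjl a γ B.toContinuousLinearEquiv hB

/-- For `d ≥ 2`, `k ≥ 1`, `l ∈ {1,…,d}` and `α ∈ ℝ^d`, there are two coordinate-wise additive
homeomorphisms `f₁, f₂` of `ℝ^d` such that
`f₁⁻¹(x) + f₂⁻¹(x) = (Σ_i α_i x_i)^k · e_l` for all `x`, where `e_l` is the `l`-th standard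
basis vector. -/
theorem power_of_linear_form_is_sum_of_two_additive_inverses (d k : ℕ)
    (hd : 2 ≤ d) (hk : 1 ≤ k) (l : Fin d) (a : Fin d → ℝ) :
    ∃ f₁ f₂ : (Fin d → ℝ) ≃ₜ (Fin d → ℝ),
      CoordAdditive ⇑f₁ ∧ CoordAdditive ⇑f₂ ∧
      ∀ x : Fin d → ℝ,
        f₁.symm x + f₂.symm x = (∑ i, a i * x i) ^ k • (Pi.single l 1 : Fin d → ℝ) :=
  power_of_linear_form_is_sum_of_two_additive_inverses_general d k hd l a
end
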